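/- arXiv:1608.00933 — 5 statements merged into one kernel-verified Lean document; each statement's English description precedes it below -/
import Mathlib

section
/- T is cofinal in the partially ordered set M: for every α ∈ M there exists a translation t ∈ T with α ≤ t, i.e., there is s ∈ T with s ∘ α = t. -/
open Function

/-- The set `S = (ℕ × ℕ) × {1,…,n}`, a disjoint union of `n` quadrants. -/
abbrev QSet (n : ℕ) := (ℕ × ℕ) × Fin n

/-- The translation of `S` with parameters `m : Fin n → ℕ`, shifting the `i`-th quadrant
diagonally by `m i`. -/
def translMap {n : ℕ} (m : Fin n → ℕ) : QSet n → QSet n :=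
  fun p => ((p.1.1 + m p.2, p.1.2 + m p.2), p.2)

/-- The generator `tᵢ` of the translation monoid `T`: diagonal shift by `1` on quadrant `Qᵢ`,
identity elsewhere. -/
def tgen {n : ℕ} (i : Fin n) : QSet n → QSet n :=
  translMap (fun j => if j = i then 1 else 0)

/-- The defining conditions of the monoid `M`: `g` is injective, eventually a diagonal
translation on each quadrant (B₁), and maps each vertical (resp. horizontal) half-line
order-preservingly onto a shifted vertical (resp. horizontal) half-line (B₂(a), B₂(b)). -/
def MCond {n : ℕ} (g : QSet n → QSet n) : Prop :=
  Function.Injective g ∧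
  ∃ (x₀ y₀ : ℕ) (m : Fin n → ℤ),
    (∀ (x y : ℕ) (i : Fin n), x₀ ≤ x → y₀ ≤ y →
      (g ((x, y), i)).2 = i ∧
      ((g ((x, y), i)).1.1 : ℤ) = (x : ℤ) + m i ∧
      ((g ((x, y), i)).1.2 : ℤ) = (y : ℤ) + m i) ∧
    (∀ (x : ℕ) (i : Fin n), ∃ (q : ℤ) (x' : ℕ) (i' : Fin n),
      ∀ y : ℕ, y₀ ≤ y →
        (g ((x, y), i)).1.1 = x' ∧ (g ((x, y), i)).2 = i' ∧
        ((g ((x, y), i)).1.2 : ℤ) = (y : ℤ) + q) ∧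
    (∀ (y : ℕ) (i : Fin n), ∃ (r : ℤ) (y' : ℕ) (i' : Fin n),
      ∀ x : ℕ, x₀ ≤ x →
        (g ((x, y), i)).1.2 = y' ∧ (g ((x, y), i)).2 = i' ∧
        ((g ((x, y), i)).1.1 : ℤ) = (x : ℤ) + r)

/-- The monoid `M` of injective self-maps of `S` satisfying B₁ and B₂. -/
def MMon (n : ℕ) := {g : QSet n → QSet n // MCond g}

/-- The order on `M`: `α ≤ β` iff `β = t α` for some translation `t ∈ T`
(maps act on the right, so `t α` means "first `t`, then `α`"). -/
def Mle {n : ℕ} (α β : MMon n) : Prop :=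
  ∃ m : Fin n → ℕ, ∀ s, α.1 (translMap m s) = β.1 s

/-- The strict order on `M`. -/
def Mlt {n : ℕ} (α β : MMon n) : Prop := Mle α β ∧ α ≠ β

/-- The degree `gr(α)`: the number of vertical half-lines occurring in the canonical
decomposition of `S - Sα`, i.e. the number of `(x,i)` such that the vertical half-line over
`(x,i)` eventually avoids the image of `α`. -/
noncomputable def gr {n : ℕ} (α : QSet n → QSet n) : ℕ :=
  Nat.card {p : ℕ × Fin n // ∃ N : ℕ, ∀ y : ℕ, N ≤ y → ((p.1, y), p.2) ∉ Set.range α}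

/-- `T` is cofinal in `M`: for every `α ∈ M` there is a translation
`t ∈ T` with `α ≤ t`, i.e. there is `s ∈ T` with `s ∘ α = t` (first `s`, then `α`). -/
theorem stmt_2 (n : ℕ) (α : MMon n) :
    ∃ t s : Fin n → ℕ, ∀ p : QSet n, α.1 (translMap s p) = translMap t p := by
  obtain ⟨-, x₀, y₀, m, hB, -, -⟩ := α.2
  set L : ℕ := max x₀ y₀ + x₀ with hL
  have hmL : ∀ j : Fin n, (0 : ℤ) ≤ (L : ℤ) + m j := by
    intro j
    have h := (hB x₀ y₀ j le_rfl le_rfl).2.1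
    have hnn : (0 : ℤ) ≤ (x₀ : ℤ) + m j := h ▸ Int.natCast_nonneg _
    have : (x₀ : ℤ) ≤ (L : ℤ) := by exact_mod_cast Nat.le_add_left x₀ (max x₀ y₀)
    linarith
  refine ⟨fun j => ((L : ℤ) + m j).toNat, fun _ => L, ?_⟩
  rintro ⟨⟨x, y⟩, i⟩
  have hx : x₀ ≤ x + L := le_add_of_le_right (le_trans (le_max_left _ _) (Nat.le_add_right _ _))
  have hy : y₀ ≤ y + L := le_add_of_le_right (le_trans (le_max_right _ _) (Nat.le_add_right _ _))
  obtain ⟨h2, h11, h12⟩ := hB (x + L) (y + L) i hx hy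
  have ht : ((((L : ℤ) + m i).toNat : ℤ)) = (L : ℤ) + m i := Int.toNat_of_nonneg (hmL i)
  show α.1 ((x + L, y + L), i) = ((x + ((L : ℤ) + m i).toNat, y + ((L : ℤ) + m i).toNat), i)
  have e1 : (α.1 ((x + L, y + L), i)).1.1 = x + ((L : ℤ) + m i).toNat := by
    have : ((α.1 ((x + L, y + L), i)).1.1 : ℤ) = ((x + ((L : ℤ) + m i).toNat : ℕ) : ℤ) := by
      push_cast [ht]; rw [h11]; push_cast; ring
    exact_mod_cast this
  have e2 : (α.1 ((x + L, y + L), i)).1.2 = y + ((L : ℤ) + m i).toNat := by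
    have : ((α.1 ((x + L, y + L), i)).1.2 : ℤ) = ((y + ((L : ℤ) + m i).toNat : ℕ) : ℤ) := by
      push_cast [ht]; rw [h12]; push_cast; ring
    exact_mod_cast this
  exact Prod.ext (Prod.ext e1 e2) h2
end

section
/- The poset M is directed: for all α, β ∈ M there exists γ ∈ M with α ≤ γ and β ≤ γ. -/
open Function

lemma translMap_comp {n : ℕ} (m m' : Fin n → ℕ) (s : QSet n) :
    translMap m (translMap m' s) = translMap (m + m') s := by
  obtain ⟨⟨x, y⟩, i⟩ := s
  simp only [translMap, Pi.add_apply, Prod.mk.injEq]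
  refine ⟨⟨?_, ?_⟩, trivial⟩ <;> omega

lemma mcond_transl {n : ℕ} (m : Fin n → ℕ) : MCond (translMap m) := by
  refine ⟨?_, 0, 0, fun i => (m i : ℤ), ?_, ?_, ?_⟩
  · rintro ⟨⟨x, y⟩, i⟩ ⟨⟨x', y'⟩, i'⟩ h
    simp only [translMap, Prod.mk.injEq] at h
    obtain ⟨⟨h1, h2⟩, h3⟩ := h
    subst h3
    simp only [Prod.mk.injEq]
    refine ⟨⟨?_, ?_⟩, trivial⟩ <;> omega
  · intro x y i _ _
    simp [translMap]
  · intro x i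
    exact ⟨(m i : ℤ), x + m i, i, fun y _ => by simp [translMap]⟩
  · intro y i
    exact ⟨(m i : ℤ), y + m i, i, fun x _ => by simp [translMap]⟩

lemma exists_transl {n : ℕ} (g : QSet n → QSet n) (hg : MCond g) :
    ∃ m a : Fin n → ℕ, ∀ s, g (translMap m s) = translMap a s := by
  obtain ⟨hinj, x₀, y₀, mz, hB1, -, -⟩ := hg
  refine ⟨fun _ => max x₀ y₀, fun i => ((max x₀ y₀ : ℤ) + mz i).toNat, ?_⟩
  rintro ⟨⟨x, y⟩, i⟩
  obtain ⟨h2, hx, hy⟩ := hB1 (x + max x₀ y₀) (y + max x₀ y₀) i (by omega) (by omega)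
  obtain ⟨-, h0, -⟩ := hB1 x₀ y₀ i le_rfl le_rfl
  have hnn : (0 : ℤ) ≤ (max x₀ y₀ : ℤ) + mz i := by
    have := Int.natCast_nonneg (g ((x₀, y₀), i)).1.1
    have hle : (x₀ : ℤ) ≤ (max x₀ y₀ : ℤ) := by exact_mod_cast Nat.le_max_left x₀ y₀
    omega
  simp only [translMap]
  refine Prod.ext (Prod.ext ?_ ?_) h2
  · show (g ((x + max x₀ y₀, y + max x₀ y₀), i)).1.1 = x + ((max x₀ y₀ : ℤ) + mz i).toNat
    omega
  · show (g ((x + max x₀ y₀, y + max x₀ y₀), i)).1.2 = y + ((max x₀ y₀ : ℤ) + mz i).toNat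
    omega

/-- The poset `M` is directed: any two elements have a common upper bound. -/
theorem stmt_3 (n : ℕ) (α β : MMon n) :
    ∃ γ : MMon n, Mle α γ ∧ Mle β γ := by
  obtain ⟨mA, a, hA⟩ := exists_transl α.1 α.2
  obtain ⟨mB, b, hB⟩ := exists_transl β.1 β.2
  refine ⟨⟨translMap (a + b), mcond_transl _⟩, ⟨mA + b, fun s => ?_⟩,
    ⟨mB + a, fun s => ?_⟩⟩
  · rw [← translMap_comp, hA, translMap_comp]
  · rw [← translMap_comp, hB, translMap_comp, add_comm b a]
end

section
/- For α ∈ M with t_i ∘ β = α for some generator t_i ∈ T and β ∈ M, the degree satisfies gr(β) = gr(α) − 1. -/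
open Function

/-- The set of vertical half-lines eventually missing the range of `g`. -/
def Vset {n : ℕ} (g : QSet n → QSet n) : Set (ℕ × Fin n) :=
  {p | ∃ N : ℕ, ∀ y : ℕ, N ≤ y → ((p.1, y), p.2) ∉ Set.range g}

lemma gr_eq_ncard {n : ℕ} (g : QSet n → QSet n) : gr g = (Vset g).ncard := by
  rw [← Nat.card_coe_set_eq]; rfl

lemma Vset_finite {n : ℕ} (g : QSet n → QSet n) (hg : MCond g) : (Vset g).Finite := by
  obtain ⟨hinj, x₀, y₀, m, hB1, -, -⟩ := hg
  set B := x₀ + Finset.univ.sup (fun j => (m j).toNat) with hBdef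
  apply Set.Finite.subset ((Set.finite_Iio B).prod Set.finite_univ)
  rintro ⟨x, j⟩ ⟨N, hN⟩
  simp only [Set.mem_prod, Set.mem_Iio, Set.mem_univ, and_true]
  by_contra hx
  push_neg at hx
  have hBj : (m j).toNat ≤ Finset.univ.sup (fun j => (m j).toNat) :=
    Finset.le_sup (f := fun j => (m j).toNat) (Finset.mem_univ j)
  have hxB : x₀ + (m j).toNat ≤ x := by omega
  set y := max N (y₀ + (m j).toNat) with hy
  have hyN : N ≤ y := le_max_left _ _
  have hyB : y₀ + (m j).toNat ≤ y := le_max_right _ _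
  set u := ((x : ℤ) - m j).toNat with hu
  set v := ((y : ℤ) - m j).toNat with hv
  have hux : x₀ ≤ u := by omega
  have hvy : y₀ ≤ v := by omega
  obtain ⟨h2, hc1, hc2⟩ := hB1 u v j hux hvy
  have e1 : (g ((u, v), j)).1.1 = x := by omega
  have e2 : (g ((u, v), j)).1.2 = y := by omega
  exact hN y hyN ⟨((u, v), j), by
    rw [Prod.ext_iff, Prod.ext_iff]; exact ⟨⟨e1, e2⟩, h2⟩⟩

/-- If `tᵢ β = α` (first `tᵢ`, then `β`) for `α, β ∈ M`,
then `gr(β) = gr(α) − 1`, i.e. `gr(α) = gr(β) + 1`. -/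
theorem stmt_6 (n : ℕ) (i : Fin n) (α β : MMon n)
    (h : ∀ s, β.1 (tgen i s) = α.1 s) :
    gr α.1 = gr β.1 + 1 := by
  obtain ⟨hβinj, x₀, y₀, m, hB1, hB2a, hB2b⟩ := β.2
  obtain ⟨q, x', i', hq⟩ := hB2a 0 i
  obtain ⟨r, y'', i'', hr⟩ := hB2b 0 i
  have hαβ : α.1 = β.1 ∘ tgen i := funext fun s => (h s).symm
  have hsub : Set.range α.1 ⊆ Set.range β.1 := by
    rw [hαβ]; exact Set.range_comp_subset_range _ _
  -- the image points of the removed vertical half-line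
  have hpt : ∀ y : ℕ, y₀ ≤ y → β.1 ((0, y), i) = ((x', ((y : ℤ) + q).toNat), i') := by
    intro y hy
    obtain ⟨h1, h2, h3⟩ := hq y hy
    have e2 : (β.1 ((0, y), i)).1.2 = ((y : ℤ) + q).toNat := by omega
    rw [Prod.ext_iff, Prod.ext_iff]
    exact ⟨⟨h1, e2⟩, h2⟩
  have hkey : ∀ y : ℕ, y₀ ≤ y → β.1 ((0, y), i) ∉ Set.range α.1 := by
    rintro y hy ⟨s, hs⟩
    rw [hαβ] at hs
    have := hβinj hs
    obtain ⟨⟨a, b⟩, j⟩ := s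
    simp only [tgen, translMap, Prod.mk.injEq] at this
    obtain ⟨⟨h1, h2⟩, h3⟩ := this
    subst h3
    rw [if_pos rfl] at h1
    omega
  have hA : (x', i') ∈ Vset α.1 := by
    refine ⟨((y₀ : ℤ) + q).toNat, fun Y hY hmem => ?_⟩
    set y := ((Y : ℤ) - q).toNat with hydef
    have hy : y₀ ≤ y := by omega
    have e : β.1 ((0, y), i) = ((x', Y), i') := by
      rw [hpt y hy]
      have : ((y : ℤ) + q).toNat = Y := by omega
      rw [this]
    exact hkey y hy (e ▸ hmem)
  have hB : (x', i') ∉ Vset β.1 := by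
    rintro ⟨N, hN⟩
    set y := max y₀ ((N : ℤ) - q).toNat with hydef
    have hy : y₀ ≤ y := le_max_left _ _
    have hY : N ≤ ((y : ℤ) + q).toNat := by omega
    exact hN _ hY ⟨((0, y), i), hpt y hy⟩
  have hC : Vset β.1 ⊆ Vset α.1 := by
    rintro ⟨x, j⟩ ⟨N, hN⟩
    exact ⟨N, fun Y hY hm => hN Y hY (hsub hm)⟩
  have hD : Vset α.1 ⊆ insert (x', i') (Vset β.1) := by
    rintro ⟨x, j⟩ ⟨N, hN⟩
    by_cases hp : (x, j) = (x', i')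
    · exact Or.inl hp
    refine Or.inr ?_
    set B1 := Finset.sup (Finset.range x₀) (fun a => (β.1 ((a, 0), i)).1.2 + 1) with hB1def
    set B2 := Finset.sup (Finset.range y₀) (fun b => (β.1 ((0, b), i)).1.2 + 1) with hB2def
    refine ⟨N ⊔ B1 ⊔ B2 ⊔ (y'' + 1), fun Y hY => ?_⟩
    rintro ⟨s, hs⟩
    have hsnot : s ∉ Set.range (tgen i) := by
      rintro ⟨u, hu⟩
      exact hN Y (by omega) ⟨u, by rw [hαβ]; simpa [Function.comp, hu] using hs⟩
    obtain ⟨⟨a, b⟩, jj⟩ := s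
    have hji : jj = i := by
      by_contra hji
      exact hsnot ⟨((a, b), jj), by simp [tgen, translMap, hji]⟩
    subst jj
    have hab : a = 0 ∨ b = 0 := by
      by_contra hab
      push_neg at hab
      obtain ⟨ha1, hb1⟩ := hab
      refine hsnot ⟨((a - 1, b - 1), i), ?_⟩
      have e1 : a - 1 + 1 = a := by omega
      have e2 : b - 1 + 1 = b := by omega
      simp only [tgen, translMap, if_pos rfl]
      rw [Prod.ext_iff, Prod.ext_iff]
      exact ⟨⟨e1, e2⟩, rfl⟩
    rcases hab with ha | hb
    · subst ha
      by_cases hb : y₀ ≤ b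
      · rw [hpt b hb] at hs
        apply hp
        rw [Prod.ext_iff, Prod.ext_iff] at hs
        obtain ⟨⟨e1, e2⟩, e3⟩ := hs
        simp only [Prod.ext_iff]
        exact ⟨e1.symm, e3.symm⟩
      · have hle : (β.1 ((0, b), i)).1.2 + 1 ≤ B2 :=
          Finset.le_sup (f := fun b => (β.1 ((0, b), i)).1.2 + 1)
            (Finset.mem_range.mpr (by omega))
        rw [hs] at hle
        have hle' : Y + 1 ≤ B2 := hle
        omega
    · subst hb
      by_cases ha : x₀ ≤ a
      · obtain ⟨e1, e2, e3⟩ := hr a ha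
        rw [hs] at e1
        have e1' : Y = y'' := e1
        omega
      · have hle : (β.1 ((a, 0), i)).1.2 + 1 ≤ B1 :=
          Finset.le_sup (f := fun a => (β.1 ((a, 0), i)).1.2 + 1)
            (Finset.mem_range.mpr (by omega))
        rw [hs] at hle
        have hle' : Y + 1 ≤ B1 := hle
        omega
  have hVα : Vset α.1 = insert (x', i') (Vset β.1) :=
    Set.Subset.antisymm hD (Set.insert_subset hA hC)
  rw [gr_eq_ncard, gr_eq_ncard, hVα,
    Set.ncard_insert_of_notMem hB (Vset_finite β.1 β.2)]
end

section
/- For α ∈ M and i ∈ {1,…,n}: there exists β ∈ M with t_i ∘ β = α if and only if gr(α) > 0. -/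
open Function

lemma fin_strip {n : ℕ} (C : ℕ) : {p : ℕ × Fin n | p.1 < C}.Finite := by
  apply Set.Finite.subset (Set.Finite.prod (Set.finite_Iio C) (Set.finite_univ))
  rintro ⟨a, j⟩ h
  exact ⟨h, trivial⟩

/-- The set counted by `gr` is finite whenever `α` satisfies B₁. -/
lemma gr_set_finite {n : ℕ} {αf : QSet n → QSet n} (hα : MCond αf) :
    {p : ℕ × Fin n | ∃ N : ℕ, ∀ y : ℕ, N ≤ y → ((p.1, y), p.2) ∉ Set.range αf}.Finite := by
  obtain ⟨-, x₀, y₀, m, hB1, -, -⟩ := hα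
  set C := x₀ + Finset.univ.sup (fun j : Fin n => (m j).toNat) with hC
  apply Set.Finite.subset (fin_strip C)
  rintro ⟨x, k⟩ ⟨N, hN⟩
  simp only [Set.mem_setOf_eq]
  by_contra hx
  push_neg at hx
  have hm : (m k).toNat ≤ Finset.univ.sup (fun j : Fin n => (m j).toNat) :=
    Finset.le_sup (f := fun j : Fin n => (m j).toNat) (Finset.mem_univ k)
  set x' := ((x : ℤ) - m k).toNat with hx'def
  have hx' : (x' : ℤ) = (x : ℤ) - m k := by omega
  have hx0 : x₀ ≤ x' := by omega
  set y' := y₀ + N + (-(m k)).toNat with hy'def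
  obtain ⟨e1, e2, e3⟩ := hB1 x' y' k hx0 (by omega)
  have hPx : (αf ((x', y'), k)).1.1 = x := by omega
  have hPy : N ≤ (αf ((x', y'), k)).1.2 := by omega
  refine hN (αf ((x', y'), k)).1.2 hPy ⟨((x', y'), k), ?_⟩
  exact Prod.ext (Prod.ext hPx rfl) e1

lemma surj_agree_off_finite {γ : Type*} {f g : γ → γ} (hf : Injective f) (hg : Injective g)
    {s : Set γ} (hs : s.Finite) (h : ∀ x ∉ s, f x = g x) (hsurj : Surjective f) :
    Surjective g := by
  have hE : f '' sᶜ = g '' sᶜ := Set.image_congr (fun x hx => h x hx)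
  have hfs : f '' s = (f '' sᶜ)ᶜ := by
    apply Set.Subset.antisymm
    · rintro _ ⟨a, ha, rfl⟩ ⟨b, hb, hba⟩
      exact hb (hf hba ▸ ha)
    · intro x hx
      obtain ⟨a, rfl⟩ := hsurj x
      rcases Classical.em (a ∈ s) with h'|h'
      · exact ⟨a, h', rfl⟩
      · exact absurd ⟨a, h', rfl⟩ hx
  have hgs : g '' s ⊆ f '' s := by
    rw [hfs, hE]
    rintro _ ⟨a, ha, rfl⟩ ⟨b, hb, hba⟩
    exact hb (hg hba ▸ ha)
  have heq : g '' s = f '' s := by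
    apply Set.eq_of_subset_of_ncard_le hgs _ (hs.image f)
    rw [Set.ncard_image_of_injective _ hg, Set.ncard_image_of_injective _ hf]
  intro x
  rcases Classical.em (x ∈ f '' sᶜ) with hx|hx
  · rw [hE] at hx; obtain ⟨a, _, ha⟩ := hx; exact ⟨a, ha⟩
  · have : x ∈ g '' s := by rw [heq, hfs]; exact hx
    obtain ⟨a, _, ha⟩ := this; exact ⟨a, ha⟩

/-- From `gr α > 0` extract a free vertical half-line and a free horizontal half-line. -/
lemma exists_rays {n : ℕ} {αf : QSet n → QSet n} (hα : MCond αf) (hgr : 0 < gr αf) :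
    ∃ (x₁ Nv : ℕ) (i₁ : Fin n) (y₁ X₀ : ℕ) (j₁ : Fin n),
      (∀ y, Nv ≤ y → ((x₁, y), i₁) ∉ Set.range αf) ∧
      (∀ x, X₀ ≤ x → ((x, y₁), j₁) ∉ Set.range αf) := by
  obtain ⟨hinj, x₀, y₀, m, hB1, hB2a, hB2b⟩ := hα
  unfold gr at hgr
  obtain ⟨⟨⟨x₁, i₁⟩, Nv, hNv⟩⟩ := (Nat.card_pos_iff.mp hgr).1
  choose Vq Vx Vi hVspec using hB2a
  choose Hr Hy Hi hHspec using hB2b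
  have hVpt : ∀ x j y, y₀ ≤ y → ∃ Y : ℕ, (Y : ℤ) = (y : ℤ) + Vq x j ∧
      αf ((x, y), j) = ((Vx x j, Y), Vi x j) := by
    intro x j y hy
    obtain ⟨e1, e2, e3⟩ := hVspec x j y hy
    exact ⟨(αf ((x, y), j)).1.2, e3, by rw [← e1, ← e2]⟩
  have hHpt : ∀ y j x, x₀ ≤ x → ∃ X : ℕ, (X : ℤ) = (x : ℤ) + Hr y j ∧
      αf ((x, y), j) = ((X, Hy y j), Hi y j) := by
    intro y j x hx
    obtain ⟨e1, e2, e3⟩ := hHspec y j x hx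
    exact ⟨(αf ((x, y), j)).1.1, e3, by rw [← e1, ← e2]⟩
  set V : ℕ × Fin n → ℕ × Fin n := fun p => (Vx p.1 p.2, Vi p.1 p.2) with hVdef
  set H : ℕ × Fin n → ℕ × Fin n := fun p => (Hy p.1 p.2, Hi p.1 p.2) with hHdef
  have hVinj : Injective V := by
    rintro ⟨a, j⟩ ⟨b, k⟩ hab
    simp only [hVdef, Prod.mk.injEq] at hab
    obtain ⟨h1, h2⟩ := hab
    obtain ⟨Ya, hYa, hpa⟩ := hVpt a j (y₀ + (Vq b k - Vq a j).toNat) (Nat.le_add_right _ _)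
    obtain ⟨Yb, hYb, hpb⟩ := hVpt b k (y₀ + (Vq a j - Vq b k).toNat) (Nat.le_add_right _ _)
    have hYY : Ya = Yb := by omega
    have hee : ((a, y₀ + (Vq b k - Vq a j).toNat), j) = ((b, y₀ + (Vq a j - Vq b k).toNat), k) :=
      hinj (by rw [hpa, hpb, h1, h2, hYY])
    simp only [Prod.mk.injEq] at hee
    obtain ⟨⟨ea, -⟩, ej⟩ := hee
    rw [ea, ej]
  have hHinj : Injective H := by
    rintro ⟨a, j⟩ ⟨b, k⟩ hab
    simp only [hHdef, Prod.mk.injEq] at hab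
    obtain ⟨h1, h2⟩ := hab
    obtain ⟨Xa, hXa, hpa⟩ := hHpt a j (x₀ + (Hr b k - Hr a j).toNat) (Nat.le_add_right _ _)
    obtain ⟨Xb, hXb, hpb⟩ := hHpt b k (x₀ + (Hr a j - Hr b k).toNat) (Nat.le_add_right _ _)
    have hXX : Xa = Xb := by omega
    have hee : ((x₀ + (Hr b k - Hr a j).toNat, a), j) = ((x₀ + (Hr a j - Hr b k).toNat, b), k) :=
      hinj (by rw [hpa, hpb, h1, h2, hXX])
    simp only [Prod.mk.injEq] at hee
    obtain ⟨⟨-, ea⟩, ej⟩ := hee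
    rw [ea, ej]
  have hVnsurj : ¬ Surjective V := by
    intro hs
    obtain ⟨⟨a, j⟩, hp⟩ := hs (x₁, i₁)
    simp only [hVdef, Prod.mk.injEq] at hp
    obtain ⟨h1, h2⟩ := hp
    obtain ⟨Y, hY, hpt⟩ := hVpt a j (y₀ + ((Nv : ℤ) - Vq a j).toNat) (Nat.le_add_right _ _)
    exact hNv Y (by omega) ⟨_, by rw [hpt, h1, h2]⟩
  set W := max x₀ y₀ with hW
  have hagree : ∀ p : ℕ × Fin n, p ∉ {q : ℕ × Fin n | q.1 < W} → V p = H p := by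
    rintro ⟨z, j⟩ hz
    simp only [Set.mem_setOf_eq, not_lt] at hz
    obtain ⟨Y, hY, hp⟩ := hVpt z j y₀ le_rfl
    obtain ⟨e1, e2, e3⟩ := hB1 z y₀ j (by omega) le_rfl
    rw [hp] at e1 e2
    obtain ⟨X, hX, hq⟩ := hHpt z j x₀ le_rfl
    obtain ⟨f1, f2, f3⟩ := hB1 x₀ z j le_rfl (by omega)
    rw [hq] at f1 f3
    simp only [hVdef, hHdef]
    have hxx : Vx z j = Hy z j := by
      have : (Vx z j : ℤ) = (Hy z j : ℤ) := by
        simp only at e2 f3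
        omega
      exact_mod_cast this
    have hii : Vi z j = Hi z j := by
      simp only at e1 f1
      rw [e1, f1]
    rw [hxx, hii]
  have hHnsurj : ¬ Surjective H := fun hs =>
    hVnsurj (surj_agree_off_finite hHinj hVinj (fin_strip W)
      (fun p hp => (hagree p hp).symm) hs)
  have hexmiss : ∃ b, ∀ a, H a ≠ b := by
    by_contra hcon
    push_neg at hcon
    exact hHnsurj fun b => hcon b
  obtain ⟨⟨y₁, j₁⟩, hy1⟩ := hexmiss
  have hBad : {x : ℕ | ((x, y₁), j₁) ∈ Set.range αf} ⊆
      (fun p : ℕ × Fin n => Vx p.1 p.2) '' {p : ℕ × Fin n | p.1 < x₀} ∪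
      (fun p : QSet n => (αf p).1.1) '' {p : QSet n | p.1.1 < x₀ ∧ p.1.2 < y₀} := by
    rintro x ⟨⟨⟨a, b⟩, k⟩, hab⟩
    by_cases ha : x₀ ≤ a
    · exfalso
      obtain ⟨e1, e2, e3⟩ := hHspec b k a ha
      rw [hab] at e1 e2
      apply hy1 (b, k)
      simp only [hHdef]
      simp only at e1 e2
      rw [← e1, ← e2]
    · by_cases hb : y₀ ≤ b
      · left
        obtain ⟨e1, -, -⟩ := hVspec a k b hb
        refine ⟨(a, k), by simpa using (by omega : a < x₀), ?_⟩
        simp only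
        rw [← e1, hab]
      · right
        refine ⟨((a, b), k), ⟨?_, ?_⟩, ?_⟩
        · show a < x₀; omega
        · show b < y₀; omega
        · show (αf ((a, b), k)).1.1 = x
          rw [hab]
  have hfin2 : {p : QSet n | p.1.1 < x₀ ∧ p.1.2 < y₀}.Finite := by
    apply Set.Finite.subset
      (Set.Finite.prod (Set.Finite.prod (Set.finite_Iio x₀) (Set.finite_Iio y₀)) Set.finite_univ)
    rintro ⟨⟨a, b⟩, k⟩ ⟨h1, h2⟩
    exact ⟨⟨h1, h2⟩, trivial⟩
  have hBadfin : {x : ℕ | ((x, y₁), j₁) ∈ Set.range αf}.Finite :=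
    Set.Finite.subset (Set.Finite.union ((fin_strip x₀).image _) (hfin2.image _)) hBad
  obtain ⟨X₀', hX₀'⟩ := hBadfin.bddAbove
  refine ⟨x₁, Nv, i₁, y₁, X₀' + 1, j₁, hNv, ?_⟩
  intro x hx hmem
  exact absurd (hX₀' hmem) (by omega)

/-- The candidate `β` with `β ∘ tᵢ = α`: uses a free vertical ray at `(x₁,i₁)` (heights `≥ Nv`)
for the column `x = 0` and a free horizontal ray at `(y₁,j₁)` (abscissae `≥ X₀`) for the
row `y = 0` of quadrant `i`. -/
def betaFun {n : ℕ} (i : Fin n) (αf : QSet n → QSet n)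
    (x₁ Nv y₁ X₀ : ℕ) (i₁ j₁ : Fin n) : QSet n → QSet n :=
  fun p =>
    if p.2 = i then
      (if p.1.1 = 0 then ((x₁, p.1.2 + Nv), i₁)
       else if p.1.2 = 0 then ((p.1.1 - 1 + X₀, y₁), j₁)
       else αf ((p.1.1 - 1, p.1.2 - 1), p.2))
    else αf p

section BetaSpec
variable {n : ℕ} (i : Fin n) (αf : QSet n → QSet n) (x₁ Nv y₁ X₀ : ℕ) (i₁ j₁ : Fin n)

lemma betaFun_V (b : ℕ) : betaFun i αf x₁ Nv y₁ X₀ i₁ j₁ ((0, b), i) = ((x₁, b + Nv), i₁) := by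
  simp [betaFun]

lemma betaFun_H {a : ℕ} (ha : a ≠ 0) :
    betaFun i αf x₁ Nv y₁ X₀ i₁ j₁ ((a, 0), i) = ((a - 1 + X₀, y₁), j₁) := by
  simp [betaFun, ha]

lemma betaFun_I {a b : ℕ} (ha : a ≠ 0) (hb : b ≠ 0) :
    betaFun i αf x₁ Nv y₁ X₀ i₁ j₁ ((a, b), i) = αf ((a - 1, b - 1), i) := by
  simp [betaFun, ha, hb]

lemma betaFun_O (a b : ℕ) {j : Fin n} (hj : j ≠ i) :
    betaFun i αf x₁ Nv y₁ X₀ i₁ j₁ ((a, b), j) = αf ((a, b), j) := by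
  simp [betaFun, hj]

end BetaSpec

lemma build_beta {n : ℕ} (i : Fin n) (αf : QSet n → QSet n) (hα : MCond αf)
    (x₁ Nv y₁ X₀ : ℕ) (i₁ j₁ : Fin n)
    (hV : ∀ y, Nv ≤ y → ((x₁, y), i₁) ∉ Set.range αf)
    (hH : ∀ x, X₀ ≤ x → ((x, y₁), j₁) ∉ Set.range αf)
    (hyy : y₁ < Nv) :
    MCond (betaFun i αf x₁ Nv y₁ X₀ i₁ j₁) ∧
      ∀ s, betaFun i αf x₁ Nv y₁ X₀ i₁ j₁ (tgen i s) = αf s := by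
  obtain ⟨hinj, x₀, y₀, m, hB1, hB2a, hB2b⟩ := hα
  constructor
  · constructor
    · -- Injectivity
      rintro ⟨⟨a, b⟩, j⟩ ⟨⟨c, d⟩, k⟩ h
      by_cases hj : j = i <;> by_cases hk : k = i
      · subst j; subst k
        by_cases ha : a = 0 <;> by_cases hc : c = 0
        · subst ha; subst hc
          rw [betaFun_V, betaFun_V] at h
          simp only [Prod.mk.injEq] at h
          obtain ⟨⟨-, h2⟩, -⟩ := h
          have : b = d := by omega
          rw [this]
        · subst ha
          by_cases hd : d = 0
          · subst hd
            rw [betaFun_V, betaFun_H _ _ _ _ _ _ _ _ hc] at h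
            simp only [Prod.mk.injEq] at h
            obtain ⟨⟨-, h2⟩, -⟩ := h
            omega
          · rw [betaFun_V, betaFun_I _ _ _ _ _ _ _ _ hc hd] at h
            exact (hV (b + Nv) (Nat.le_add_left _ _) ⟨_, h.symm⟩).elim
        · subst hc
          by_cases hb : b = 0
          · subst hb
            rw [betaFun_H _ _ _ _ _ _ _ _ ha, betaFun_V] at h
            simp only [Prod.mk.injEq] at h
            obtain ⟨⟨-, h2⟩, -⟩ := h
            omega
          · rw [betaFun_I _ _ _ _ _ _ _ _ ha hb, betaFun_V] at h
            exact (hV (d + Nv) (Nat.le_add_left _ _) ⟨_, h⟩).elim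
        · by_cases hb : b = 0 <;> by_cases hd : d = 0
          · subst hb; subst hd
            rw [betaFun_H _ _ _ _ _ _ _ _ ha, betaFun_H _ _ _ _ _ _ _ _ hc] at h
            simp only [Prod.mk.injEq] at h
            obtain ⟨⟨h1, -⟩, -⟩ := h
            have : a = c := by omega
            rw [this]
          · subst hb
            rw [betaFun_H _ _ _ _ _ _ _ _ ha, betaFun_I _ _ _ _ _ _ _ _ hc hd] at h
            exact (hH (a - 1 + X₀) (Nat.le_add_left _ _) ⟨_, h.symm⟩).elim
          · subst hd
            rw [betaFun_I _ _ _ _ _ _ _ _ ha hb, betaFun_H _ _ _ _ _ _ _ _ hc] at h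
            exact (hH (c - 1 + X₀) (Nat.le_add_left _ _) ⟨_, h⟩).elim
          · rw [betaFun_I _ _ _ _ _ _ _ _ ha hb, betaFun_I _ _ _ _ _ _ _ _ hc hd] at h
            have e := hinj h
            simp only [Prod.mk.injEq] at e
            obtain ⟨⟨e1, e2⟩, -⟩ := e
            have h1 : a = c := by omega
            have h2 : b = d := by omega
            rw [h1, h2]
      · subst j
        rw [betaFun_O _ _ _ _ _ _ _ _ _ _ hk] at h
        by_cases ha : a = 0
        · subst ha; rw [betaFun_V] at h
          exact (hV (b + Nv) (Nat.le_add_left _ _) ⟨_, h.symm⟩).elim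
        · by_cases hb : b = 0
          · subst hb; rw [betaFun_H _ _ _ _ _ _ _ _ ha] at h
            exact (hH (a - 1 + X₀) (Nat.le_add_left _ _) ⟨_, h.symm⟩).elim
          · rw [betaFun_I _ _ _ _ _ _ _ _ ha hb] at h
            have e := hinj h
            exact absurd (congrArg Prod.snd e).symm hk
      · subst k
        rw [betaFun_O _ _ _ _ _ _ _ _ _ _ hj] at h
        by_cases hc : c = 0
        · subst hc; rw [betaFun_V] at h
          exact (hV (d + Nv) (Nat.le_add_left _ _) ⟨_, h⟩).elim
        · by_cases hd : d = 0
          · subst hd; rw [betaFun_H _ _ _ _ _ _ _ _ hc] at h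
            exact (hH (c - 1 + X₀) (Nat.le_add_left _ _) ⟨_, h⟩).elim
          · rw [betaFun_I _ _ _ _ _ _ _ _ hc hd] at h
            have e := hinj h
            exact absurd (congrArg Prod.snd e) hj
      · rw [betaFun_O _ _ _ _ _ _ _ _ _ _ hj, betaFun_O _ _ _ _ _ _ _ _ _ _ hk] at h
        exact hinj h
    · -- B₁, B₂
      refine ⟨x₀ + 1, y₀ + 1, fun j => if j = i then m i - 1 else m j, ?_, ?_, ?_⟩
      · -- B₁
        intro x y j hx hy
        by_cases hj : j = i
        · subst j
          rw [betaFun_I _ _ _ _ _ _ _ _ (show x ≠ 0 by omega) (show y ≠ 0 by omega)]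
          obtain ⟨e1, e2, e3⟩ := hB1 (x - 1) (y - 1) i (by omega) (by omega)
          have hred : (fun j => if j = i then m i - 1 else m j) i = m i - 1 := by simp
          rw [hred]
          exact ⟨e1, by omega, by omega⟩
        · rw [betaFun_O _ _ _ _ _ _ _ _ _ _ hj]
          have hred : (fun j' => if j' = i then m i - 1 else m j') j = m j := by simp [hj]
          rw [hred]
          exact hB1 x y j (by omega) (by omega)
      · -- B₂(a)
        intro x j
        by_cases hj : j = i
        · subst j
          by_cases hx : x = 0
          · subst hx
            refine ⟨(Nv : ℤ), x₁, i₁, fun y hy => ?_⟩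
            rw [betaFun_V]
            exact ⟨rfl, rfl, by push_cast; ring⟩
          · obtain ⟨q, x', i', hq⟩ := hB2a (x - 1) i
            refine ⟨q - 1, x', i', fun y hy => ?_⟩
            rw [betaFun_I _ _ _ _ _ _ _ _ hx (show y ≠ 0 by omega)]
            obtain ⟨e1, e2, e3⟩ := hq (y - 1) (by omega)
            exact ⟨e1, e2, by omega⟩
        · obtain ⟨q, x', i', hq⟩ := hB2a x j
          refine ⟨q, x', i', fun y hy => ?_⟩
          rw [betaFun_O _ _ _ _ _ _ _ _ _ _ hj]
          exact hq y (by omega)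
      · -- B₂(b)
        intro y j
        by_cases hj : j = i
        · subst j
          by_cases hy : y = 0
          · subst hy
            refine ⟨(X₀ : ℤ) - 1, y₁, j₁, fun x hx => ?_⟩
            rw [betaFun_H _ _ _ _ _ _ _ _ (show x ≠ 0 by omega)]
            refine ⟨rfl, rfl, ?_⟩
            show ((x - 1 + X₀ : ℕ) : ℤ) = (x : ℤ) + ((X₀ : ℤ) - 1)
            omega
          · obtain ⟨r, y', i', hr⟩ := hB2b (y - 1) i
            refine ⟨r - 1, y', i', fun x hx => ?_⟩
            rw [betaFun_I _ _ _ _ _ _ _ _ (show x ≠ 0 by omega) hy]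
            obtain ⟨e1, e2, e3⟩ := hr (x - 1) (by omega)
            exact ⟨e1, e2, by omega⟩
        · obtain ⟨r, y', i', hr⟩ := hB2b y j
          refine ⟨r, y', i', fun x hx => ?_⟩
          rw [betaFun_O _ _ _ _ _ _ _ _ _ _ hj]
          exact hr x (by omega)
  · -- compatibility
    rintro ⟨⟨a, b⟩, j⟩
    by_cases hj : j = i
    · subst j
      have ht : tgen i ((a, b), i) = ((a + 1, b + 1), i) := by simp [tgen, translMap]
      rw [ht, betaFun_I _ _ _ _ _ _ _ _ (Nat.succ_ne_zero a) (Nat.succ_ne_zero b)]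
      simp
    · have ht : tgen i ((a, b), j) = ((a, b), j) := by simp [tgen, translMap, hj]
      rw [ht, betaFun_O _ _ _ _ _ _ _ _ _ _ hj]

/-- For `α ∈ M` and `i ∈ {1,…,n}`: there exists `β ∈ M` with `tᵢ β = α`
if and only if `gr(α) > 0`. -/
theorem stmt_7 (n : ℕ) (i : Fin n) (α : MMon n) :
    (∃ β : MMon n, ∀ s, β.1 (tgen i s) = α.1 s) ↔ 0 < gr α.1 := by
  constructor
  · rintro ⟨β, hβ⟩
    unfold gr
    rw [Nat.card_pos_iff]
    constructor
    · obtain ⟨hβinj, xβ, yβ, mβ, hB1β, hB2aβ, hB2bβ⟩ := β.2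
      obtain ⟨q, x', i', hq⟩ := hB2aβ 0 i
      refine ⟨⟨(x', i'), ((yβ : ℤ) + q).toNat, ?_⟩⟩
      rintro Y hY ⟨s, hs⟩
      set y := ((Y : ℤ) - q).toNat with hydef
      have hyβ : yβ ≤ y := by omega
      obtain ⟨e1, e2, e3⟩ := hq y hyβ
      have hYe : (β.1 ((0, y), i)).1.2 = Y := by omega
      have hβpt : β.1 ((0, y), i) = (((x', i').1, Y), (x', i').2) :=
        Prod.ext (Prod.ext e1 hYe) e2
      have hts : β.1 (tgen i s) = β.1 ((0, y), i) := by rw [hβ s, hs, hβpt]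
      have ht := hβinj hts
      obtain ⟨⟨a, b⟩, j⟩ := s
      by_cases hj : j = i
      · subst j
        have htg : tgen i ((a, b), i) = ((a + 1, b + 1), i) := by simp [tgen, translMap]
        rw [htg] at ht
        exact absurd (congrArg (fun p => p.1.1) ht) (by simp)
      · have htg : tgen i ((a, b), j) = ((a, b), j) := by simp [tgen, translMap, hj]
        rw [htg] at ht
        exact hj (congrArg Prod.snd ht)
    · exact (gr_set_finite α.2).to_subtype
  · intro hgr
    obtain ⟨x₁, Nv, i₁, y₁, X₀, j₁, hNv, hX₀⟩ := exists_rays α.2 hgr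
    have hV' : ∀ y, max Nv (y₁ + 1) ≤ y → ((x₁, y), i₁) ∉ Set.range α.1 :=
      fun y hy => hNv y (by omega)
    have hyy : y₁ < max Nv (y₁ + 1) := by omega
    obtain ⟨hM, hcomp⟩ := build_beta i α.1 α.2 x₁ (max Nv (y₁ + 1)) y₁ X₀ i₁ j₁ hV' hX₀ hyy
    exact ⟨⟨_, hM⟩, hcomp⟩
end

section
/- Two p-simplices (α₀,…,α_p) and (β₀,…,β_p) of the order complex of M^n lie in the same G_n-orbit if and only if gr(α₀) = gr(β₀) and (t_{α₁},…,t_{α_p}) = (t_{β₁},…,t_{β_p}), where t_{α_i} ∈ T is the unique translation with t_{α_i} α_{i−1} = α_i (and similarly for β). -/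
open Function

namespace S13
variable {n : ℕ}

/-- data for B1, B2a, B2b -/
def MData (α : QSet n → QSet n) (x₀ y₀ : ℕ) (m : Fin n → ℤ) : Prop :=
  (∀ (x y : ℕ) (i : Fin n), x₀ ≤ x → y₀ ≤ y →
      (α ((x, y), i)).2 = i ∧
      ((α ((x, y), i)).1.1 : ℤ) = (x : ℤ) + m i ∧
      ((α ((x, y), i)).1.2 : ℤ) = (y : ℤ) + m i) ∧
    (∀ (x : ℕ) (i : Fin n), ∃ (q : ℤ) (x' : ℕ) (i' : Fin n),
      ∀ y : ℕ, y₀ ≤ y →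
        (α ((x, y), i)).1.1 = x' ∧ (α ((x, y), i)).2 = i' ∧
        ((α ((x, y), i)).1.2 : ℤ) = (y : ℤ) + q) ∧
    (∀ (y : ℕ) (i : Fin n), ∃ (r : ℤ) (y' : ℕ) (i' : Fin n),
      ∀ x : ℕ, x₀ ≤ x →
        (α ((x, y), i)).1.2 = y' ∧ (α ((x, y), i)).2 = i' ∧
        ((α ((x, y), i)).1.1 : ℤ) = (x : ℤ) + r)

def Avoid (α : QSet n → QSet n) : Set (ℕ × Fin n) :=
  {p | ∃ N : ℕ, ∀ y : ℕ, N ≤ y → ((p.1, y), p.2) ∉ Set.range α}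

attribute [local instance] Classical.propDecidable

lemma gr_eq_ncard (α : QSet n → QSet n) : gr α = Nat.card (Avoid α) := rfl

def transQ : QSet n → QSet n := fun s => ((s.1.2, s.1.1), s.2)

@[simp] lemma transQ_transQ (s : QSet n) : transQ (transQ s) = s := rfl

def conj (α : QSet n → QSet n) : QSet n → QSet n := fun s => transQ (α (transQ s))

def AvoidH (α : QSet n → QSet n) : Set (ℕ × Fin n) := Avoid (conj α)

lemma mem_range_conj {α : QSet n → QSet n} {s : QSet n} :
    s ∈ Set.range (conj α) ↔ transQ s ∈ Set.range α := by
  constructor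
  · rintro ⟨t, rfl⟩; exact ⟨transQ t, rfl⟩
  · rintro ⟨t, ht⟩; exact ⟨transQ t, by simp [conj, ht]⟩

lemma mem_AvoidH {α : QSet n → QSet n} {p : ℕ × Fin n} :
    p ∈ AvoidH α ↔ ∃ N : ℕ, ∀ x : ℕ, N ≤ x → ((x, p.1), p.2) ∉ Set.range α := by
  unfold AvoidH Avoid
  constructor
  · rintro ⟨N, hN⟩
    exact ⟨N, fun x hx hr => hN x hx (mem_range_conj.2 hr)⟩
  · rintro ⟨N, hN⟩
    exact ⟨N, fun x hx hr => hN x hx (mem_range_conj.1 hr)⟩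

lemma MData_conj {α : QSet n → QSet n} {x₀ y₀ : ℕ} {m : Fin n → ℤ}
    (h : MData α x₀ y₀ m) : MData (conj α) y₀ x₀ m := by
  obtain ⟨h1, h2, h3⟩ := h
  refine ⟨?_, ?_, ?_⟩
  · intro x y i hx hy
    obtain ⟨a, b, c⟩ := h1 y x i hy hx
    exact ⟨a, c, b⟩
  · intro x i
    obtain ⟨r, y', i', hr⟩ := h3 x i
    exact ⟨r, y', i', fun y hy => ⟨(hr y hy).1, (hr y hy).2.1, (hr y hy).2.2⟩⟩
  · intro y i
    obtain ⟨q, x', i', hq⟩ := h2 y i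
    exact ⟨q, x', i', fun x hx => ⟨(hq x hx).1, (hq x hx).2.1, (hq x hx).2.2⟩⟩

lemma injective_conj {α : QSet n → QSet n} (h : Injective α) : Injective (conj α) := by
  intro a b hab
  have : α (transQ a) = α (transQ b) := by
    have := congrArg transQ hab
    simpa [conj] using this
  have := h this
  have := congrArg transQ this
  simpa using this

/-- B1 surjectivity onto the shifted quadrant. -/
lemma B1_range {α : QSet n → QSet n} {x₀ y₀ : ℕ} {m : Fin n → ℤ}
    (h1 : ∀ (x y : ℕ) (i : Fin n), x₀ ≤ x → y₀ ≤ y →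
      (α ((x, y), i)).2 = i ∧
      ((α ((x, y), i)).1.1 : ℤ) = (x : ℤ) + m i ∧
      ((α ((x, y), i)).1.2 : ℤ) = (y : ℤ) + m i)
    (x y : ℕ) (i : Fin n) (hx : (x₀ : ℤ) + m i ≤ x) (hy : (y₀ : ℤ) + m i ≤ y) :
    ((x, y), i) ∈ Set.range α := by
  refine ⟨((((x : ℤ) - m i).toNat, ((y : ℤ) - m i).toNat), i), ?_⟩
  have hx' : (x₀ : ℤ) ≤ ((x : ℤ) - m i) := by omega
  have hy' : (y₀ : ℤ) ≤ ((y : ℤ) - m i) := by omega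
  have hxn : x₀ ≤ ((x : ℤ) - m i).toNat := by omega
  have hyn : y₀ ≤ ((y : ℤ) - m i).toNat := by omega
  obtain ⟨a, b, c⟩ := h1 _ _ i hxn hyn
  have hb : ((α ((((x : ℤ) - m i).toNat, ((y : ℤ) - m i).toNat), i)).1.1 : ℤ) = x := by
    rw [b]; omega
  have hc : ((α ((((x : ℤ) - m i).toNat, ((y : ℤ) - m i).toNat), i)).1.2 : ℤ) = y := by
    rw [c]; omega
  have h1' : (α ((((x : ℤ) - m i).toNat, ((y : ℤ) - m i).toNat), i)).1.1 = x := by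
    exact_mod_cast hb
  have h2' : (α ((((x : ℤ) - m i).toNat, ((y : ℤ) - m i).toNat), i)).1.2 = y := by
    exact_mod_cast hc
  rw [show ((x,y),i) = (((α ((((x : ℤ) - m i).toNat, ((y : ℤ) - m i).toNat), i)).1.1,
    (α ((((x : ℤ) - m i).toNat, ((y : ℤ) - m i).toNat), i)).1.2),
    (α ((((x : ℤ) - m i).toNat, ((y : ℤ) - m i).toNat), i)).2) from by rw [h1', h2', a]]

/-- Column structure: the column map `V`, its shifts `q`, injectivity, behaviour on
large columns, and the characterization of `Avoid` as the complement of the range of `V`. -/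
lemma colStruct {α : QSet n → QSet n} (hinj : Injective α) {x₀ y₀ : ℕ} {m : Fin n → ℤ}
    (hD : MData α x₀ y₀ m) :
    ∃ (V : ℕ × Fin n → ℕ × Fin n) (q : ℕ × Fin n → ℤ),
      (∀ (a : ℕ) (j : Fin n) (y : ℕ), y₀ ≤ y →
        (α ((a, y), j)).1.1 = (V (a, j)).1 ∧ (α ((a, y), j)).2 = (V (a, j)).2 ∧
        ((α ((a, y), j)).1.2 : ℤ) = (y : ℤ) + q (a, j)) ∧
      Injective V ∧
      (∀ (a : ℕ) (j : Fin n), x₀ ≤ a →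
        (((V (a, j)).1 : ℤ) = (a : ℤ) + m j ∧ (V (a, j)).2 = j ∧ q (a, j) = m j)) ∧
      (∀ p : ℕ × Fin n, p ∈ Avoid α ↔ p ∉ Set.range V) := by
  obtain ⟨h1, h2, h3⟩ := hD
  choose qf xf jf hq using h2
  refine ⟨fun p => (xf p.1 p.2, jf p.1 p.2), fun p => qf p.1 p.2, ?_, ?_, ?_, ?_⟩
  · intro a j y hy
    exact hq a j y hy
  · -- injectivity of V
    rintro ⟨a₁, j₁⟩ ⟨a₂, j₂⟩ hV
    simp only [Prod.mk.injEq] at hV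
    obtain ⟨hx, hj⟩ := hV
    set y₁ : ℕ := y₀ + (qf a₂ j₂ - qf a₁ j₁).toNat with hy₁
    set y₂ : ℕ := y₀ + (qf a₁ j₁ - qf a₂ j₂).toNat with hy₂
    obtain ⟨e1, e2, e3⟩ := hq a₁ j₁ y₁ (by omega)
    obtain ⟨f1, f2, f3⟩ := hq a₂ j₂ y₂ (by omega)
    have hyy : (y₁ : ℤ) + qf a₁ j₁ = (y₂ : ℤ) + qf a₂ j₂ := by omega
    have himg : α ((a₁, y₁), j₁) = α ((a₂, y₂), j₂) := by
      have c2 : (α ((a₁, y₁), j₁)).1.2 = (α ((a₂, y₂), j₂)).1.2 := by omega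
      have c1 : (α ((a₁, y₁), j₁)).1.1 = (α ((a₂, y₂), j₂)).1.1 := by rw [e1, f1, hx]
      have c3 : (α ((a₁, y₁), j₁)).2 = (α ((a₂, y₂), j₂)).2 := by rw [e2, f2, hj]
      rw [show α ((a₂, y₂), j₂) = (((α ((a₂, y₂), j₂)).1.1, (α ((a₂, y₂), j₂)).1.2),
        (α ((a₂, y₂), j₂)).2) from rfl, ← c1, ← c2, ← c3]
    have := hinj himg
    simp only [Prod.mk.injEq] at this
    simp [this.1.1, this.2]
  · -- large columns
    intro a j ha
    obtain ⟨b1, b2, b3⟩ := h1 a y₀ j ha le_rfl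
    obtain ⟨e1, e2, e3⟩ := hq a j y₀ le_rfl
    refine ⟨?_, ?_, ?_⟩
    · show ((xf a j : ℕ) : ℤ) = (a : ℤ) + m j
      rw [e1] at b2; exact b2
    · show jf a j = j
      rw [← e2]; exact b1
    · show qf a j = m j
      omega
  · -- Avoid ↔ not in range V
    intro p
    constructor
    · rintro ⟨N, hN⟩ ⟨⟨a, j⟩, rfl⟩
      set y : ℕ := y₀ + N + (-(qf a j)).toNat with hy
      obtain ⟨e1, e2, e3⟩ := hq a j y (by omega)
      have hh : N ≤ (α ((a, y), j)).1.2 := by omega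
      refine hN _ hh ⟨((a, y), j), ?_⟩
      show α ((a, y), j) = ((xf a j, (α ((a, y), j)).1.2), jf a j)
      rw [show ((xf a j, (α ((a, y), j)).1.2), jf a j) = (((α ((a, y), j)).1.1,
        (α ((a, y), j)).1.2), (α ((a, y), j)).2) from by rw [e1, e2]]
    · intro hnr
      -- bad heights
      choose rf yf i2f hrow using h3
      classical
      set H1 : Finset ℕ := (Finset.range y₀ ×ˢ (Finset.univ : Finset (Fin n))).image
        (fun bj => yf bj.1 bj.2) with hH1
      set H2 : Finset ℕ := ((Finset.range x₀ ×ˢ Finset.range y₀) ×ˢ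
        (Finset.univ : Finset (Fin n))).image (fun ab => (α ((ab.1.1, ab.1.2), ab.2)).1.2)
        with hH2
      set N : ℕ := (H1 ∪ H2).sup id + 1 with hNdef
      refine ⟨N, fun h hNh ⟨⟨⟨a, b⟩, j⟩, hab⟩ => ?_⟩
      by_cases hb : y₀ ≤ b
      · obtain ⟨e1, e2, e3⟩ := hq a j b hb
        refine hnr ⟨(a, j), ?_⟩
        have hp1 : p.1 = xf a j := by rw [← e1, hab]
        have hp2 : p.2 = jf a j := by rw [← e2, hab]
        show (xf a j, jf a j) = p
        rw [← hp1, ← hp2]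
      · push_neg at hb
        have hhval : (α ((a, b), j)).1.2 = h := by rw [hab]
        by_cases hax : x₀ ≤ a
        · obtain ⟨f1, f2, f3⟩ := hrow b j a hax
          have hmem : h ∈ H1 := by
            rw [hH1]
            exact Finset.mem_image.2 ⟨(b, j), Finset.mem_product.2
              ⟨Finset.mem_range.2 hb, Finset.mem_univ _⟩, by rw [← f1, hhval]⟩
          have : h ≤ (H1 ∪ H2).sup id := Finset.le_sup (f := id) (Finset.mem_union_left _ hmem)
          omega
        · push_neg at hax
          have hmem : h ∈ H2 := by
            rw [hH2]
            exact Finset.mem_image.2 ⟨((a, b), j), Finset.mem_product.2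
              ⟨Finset.mem_product.2 ⟨Finset.mem_range.2 hax, Finset.mem_range.2 hb⟩,
                Finset.mem_univ _⟩, hhval⟩
          have : h ≤ (H1 ∪ H2).sup id := Finset.le_sup (f := id) (Finset.mem_union_right _ hmem)
          omega

lemma grm {α : QSet n → QSet n} (hinj : Injective α) {x₀ y₀ : ℕ} {m : Fin n → ℤ}
    (hD : MData α x₀ y₀ m) :
    (Avoid α).Finite ∧ ((Nat.card (Avoid α) : ℤ) = ∑ i : Fin n, m i) := by
  classical
  obtain ⟨V, q, hV, hVinj, hVhigh, hAv⟩ := colStruct hinj hD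
  -- nonnegativity of x₀ + m i
  have hnn : ∀ i : Fin n, 0 ≤ (x₀ : ℤ) + m i := by
    intro i
    have hv1 := (hVhigh x₀ i le_rfl).1
    rw [← hv1]
    exact Int.natCast_nonneg _
  set Bf : Finset (ℕ × Fin n) := (Finset.univ : Finset (Fin n)).biUnion
    (fun i => (Finset.range ((x₀ : ℤ) + m i).toNat).image (fun x => (x, i))) with hBf
  have memBf : ∀ p : ℕ × Fin n, p ∈ Bf ↔ ((p.1 : ℤ) < (x₀ : ℤ) + m p.2) := by
    rintro ⟨x, i⟩
    rw [hBf]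
    simp only [Finset.mem_biUnion, Finset.mem_univ, Finset.mem_image, Finset.mem_range,
      true_and]
    constructor
    · rintro ⟨j, a, ha, h⟩
      obtain ⟨rfl, rfl⟩ := Prod.mk.injEq .. ▸ h
      · omega
    · intro h
      exact ⟨i, x, by omega, rfl⟩
  have cardBf : (Bf.card : ℤ) = ∑ i : Fin n, ((x₀ : ℤ) + m i) := by
    rw [hBf, Finset.card_biUnion]
    · push_cast
      apply Finset.sum_congr rfl
      intro i _
      rw [Finset.card_image_of_injective _ (fun a b h => (Prod.mk.injEq .. ▸ h).1),
        Finset.card_range]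
      have := hnn i
      omega
    · intro i _ j _ hij
      simp only [Finset.disjoint_left, Finset.mem_image, Finset.mem_range]
      rintro ⟨x, ii⟩ ⟨a, _, h⟩ ⟨b, _, h'⟩
      obtain ⟨rfl, rfl⟩ := Prod.mk.injEq .. ▸ h
      obtain ⟨-, rfl⟩ := Prod.mk.injEq .. ▸ h'
      exact hij rfl
  -- Avoid ⊆ Bf
  have hsub : Avoid α ⊆ ↑Bf := by
    intro p hp
    rw [Finset.mem_coe, memBf]
    by_contra hge
    push_neg at hge
    refine (hAv p).1 hp ⟨(((p.1 : ℤ) - m p.2).toNat, p.2), ?_⟩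
    have ha : x₀ ≤ ((p.1 : ℤ) - m p.2).toNat := by omega
    obtain ⟨c1, c2, c3⟩ := hVhigh _ p.2 ha
    have : ((V (((p.1 : ℤ) - m p.2).toNat, p.2)).1 : ℤ) = p.1 := by omega
    have h1 : (V (((p.1 : ℤ) - m p.2).toNat, p.2)).1 = p.1 := by exact_mod_cast this
    exact Prod.ext_iff.2 ⟨h1, c2⟩
  have hfin : (Avoid α).Finite := Set.Finite.subset Bf.finite_toSet hsub
  -- the image of the small columns
  set Cf : Finset (ℕ × Fin n) := Finset.range x₀ ×ˢ (Finset.univ : Finset (Fin n)) with hCf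
  set VCf : Finset (ℕ × Fin n) := Cf.image V with hVCf
  have cardVCf : VCf.card = x₀ * n := by
    rw [hVCf, Finset.card_image_of_injective _ hVinj, hCf, Finset.card_product,
      Finset.card_range, Finset.card_univ, Fintype.card_fin]
  have hVCf_not_avoid : ∀ p ∈ VCf, p ∉ Avoid α := by
    intro p hp
    rw [hVCf, Finset.mem_image] at hp
    obtain ⟨c, _, rfl⟩ := hp
    intro hav
    exact (hAv _).1 hav ⟨c, rfl⟩
  have hVCf_sub : VCf ⊆ Bf := by
    intro p hp
    rw [hVCf, Finset.mem_image] at hp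
    obtain ⟨⟨c, j⟩, hc, rfl⟩ := hp
    rw [hCf, Finset.mem_product, Finset.mem_range] at hc
    rw [memBf]
    by_contra hge
    push_neg at hge
    have ha : x₀ ≤ (((V (c, j)).1 : ℤ) - m (V (c, j)).2).toNat := by omega
    obtain ⟨c1, c2, c3⟩ := hVhigh _ (V (c, j)).2 ha
    have he : V ((((V (c, j)).1 : ℤ) - m (V (c, j)).2).toNat, (V (c, j)).2) = V (c, j) := by
      have : ((V ((((V (c, j)).1 : ℤ) - m (V (c, j)).2).toNat, (V (c, j)).2)).1 : ℤ)
          = (V (c, j)).1 := by omega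
      have h1 : (V ((((V (c, j)).1 : ℤ) - m (V (c, j)).2).toNat, (V (c, j)).2)).1
          = (V (c, j)).1 := by exact_mod_cast this
      exact Prod.ext_iff.2 ⟨h1, c2⟩
    have := hVinj he
    have : (((V (c, j)).1 : ℤ) - m (V (c, j)).2).toNat = c := (Prod.mk.injEq .. ▸ this).1
    omega
  -- Bf is the disjoint union of Avoid and VCf
  have hunion : ∀ p ∈ Bf, p ∉ Avoid α → p ∈ VCf := by
    intro p hp hnav
    have hr : p ∈ Set.range V := by
      by_contra h
      exact hnav ((hAv p).2 h)
    obtain ⟨⟨a, j⟩, rfl⟩ := hr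
    rw [hVCf, Finset.mem_image]
    refine ⟨(a, j), ?_, rfl⟩
    rw [hCf, Finset.mem_product, Finset.mem_range]
    refine ⟨?_, Finset.mem_univ _⟩
    by_contra hge
    push_neg at hge
    obtain ⟨c1, c2, c3⟩ := hVhigh a j hge
    rw [memBf] at hp
    rw [c2] at hp
    omega
  -- conclude
  set Af : Finset (ℕ × Fin n) := hfin.toFinset with hAf
  have hAfBf : Af ⊆ Bf := by
    intro p hp
    rw [hAf, Set.Finite.mem_toFinset] at hp
    exact hsub hp
  have hdisj : Disjoint Af VCf := by
    rw [Finset.disjoint_left]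
    intro p hp hp'
    rw [hAf, Set.Finite.mem_toFinset] at hp
    exact hVCf_not_avoid p hp' hp
  have hcover : Bf = Af ∪ VCf := by
    apply Finset.ext
    intro p
    constructor
    · intro hp
      rw [Finset.mem_union]
      by_cases hav : p ∈ Avoid α
      · left; rw [hAf, Set.Finite.mem_toFinset]; exact hav
      · right; exact hunion p hp hav
    · intro hp
      rcases Finset.mem_union.1 hp with h | h
      · exact hAfBf h
      · exact hVCf_sub h
  have hcard : Bf.card = Af.card + VCf.card := by
    rw [hcover, Finset.card_union_of_disjoint hdisj]
  have hncard : Nat.card (Avoid α) = Af.card := by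
    rw [Nat.card_eq_card_finite_toFinset hfin]
  refine ⟨hfin, ?_⟩
  rw [hncard]
  have : (Af.card : ℤ) = (Bf.card : ℤ) - (x₀ * n : ℕ) := by
    rw [hcard, cardVCf]; push_cast; ring
  rw [this, cardBf, Finset.sum_add_distrib]
  simp [Finset.sum_const, mul_comm]

/-- A uniform bound on the column shifts. -/
lemma qbound {x₀ : ℕ} {mα : Fin n → ℤ} (q : ℕ × Fin n → ℤ)
    (hq : ∀ (a : ℕ) (j : Fin n), x₀ ≤ a → q (a, j) = mα j) :
    ∃ QB : ℕ, ∀ p : ℕ × Fin n, (q p).natAbs ≤ QB := by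
  classical
  refine ⟨((Finset.range x₀ ×ˢ (Finset.univ : Finset (Fin n))).sup fun p => (q p).natAbs) ⊔
    ((Finset.univ : Finset (Fin n)).sup fun j => (mα j).natAbs), ?_⟩
  rintro ⟨a, j⟩
  by_cases ha : a < x₀
  · exact le_trans (Finset.le_sup (f := fun p => (q p).natAbs)
      (Finset.mem_product.2 ⟨Finset.mem_range.2 ha, Finset.mem_univ _⟩)) le_sup_left
  · push_neg at ha
    rw [hq a j ha]
    exact le_trans (Finset.le_sup (f := fun j => (mα j).natAbs)
      (Finset.mem_univ _)) le_sup_right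

/-- Points of the avoided columns lie in the left strip. -/
lemma avoid_strip {α : QSet n → QSet n} (hinj : Injective α) {x₀ y₀ : ℕ} {m : Fin n → ℤ}
    (hD : MData α x₀ y₀ m) : ∀ p ∈ Avoid α, ((p.1 : ℤ) < (x₀ : ℤ) + m p.2) := by
  obtain ⟨V, q, hV, hVinj, hVhigh, hAv⟩ := colStruct hinj hD
  intro p hp
  by_contra hge
  push_neg at hge
  refine (hAv p).1 hp ⟨(((p.1 : ℤ) - m p.2).toNat, p.2), ?_⟩
  have ha : x₀ ≤ ((p.1 : ℤ) - m p.2).toNat := by omega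
  obtain ⟨c1, c2, c3⟩ := hVhigh _ p.2 ha
  have : ((V (((p.1 : ℤ) - m p.2).toNat, p.2)).1 : ℤ) = p.1 := by omega
  have h1 : (V (((p.1 : ℤ) - m p.2).toNat, p.2)).1 = p.1 := by exact_mod_cast this
  exact Prod.ext_iff.2 ⟨h1, c2⟩

/-- A point of the quadrant far enough along the diagonal, written as an explicit image. -/
lemma B1_point {α : QSet n → QSet n} {x₀ y₀ : ℕ} {m : Fin n → ℤ}
    (hD : MData α x₀ y₀ m)
    (x y : ℕ) (i : Fin n) (hx : (x₀ : ℤ) + m i ≤ x) (hy : (y₀ : ℤ) + m i ≤ y) :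
    α ((((x : ℤ) - m i).toNat, ((y : ℤ) - m i).toNat), i) = ((x, y), i) := by
  have hxn : x₀ ≤ ((x : ℤ) - m i).toNat := by omega
  have hyn : y₀ ≤ ((y : ℤ) - m i).toNat := by omega
  obtain ⟨a, b, c⟩ := hD.1 _ _ i hxn hyn
  have hb : (α ((((x : ℤ) - m i).toNat, ((y : ℤ) - m i).toNat), i)).1.1 = x := by
    have : ((α ((((x : ℤ) - m i).toNat, ((y : ℤ) - m i).toNat), i)).1.1 : ℤ) = x := by
      rw [b]; omega
    exact_mod_cast this
  have hc : (α ((((x : ℤ) - m i).toNat, ((y : ℤ) - m i).toNat), i)).1.2 = y := by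
    have : ((α ((((x : ℤ) - m i).toNat, ((y : ℤ) - m i).toNat), i)).1.2 : ℤ) = y := by
      rw [c]; omega
    exact_mod_cast this
  exact Prod.ext_iff.2 ⟨Prod.ext_iff.2 ⟨hb, hc⟩, a⟩

/-- Columns that are not avoided are eventually filled. -/
lemma colFill {α : QSet n → QSet n} (hinj : Injective α) {x₀ y₀ : ℕ} {m : Fin n → ℤ}
    (hD : MData α x₀ y₀ m) :
    ∀ p : ℕ × Fin n, p ∉ Avoid α → ∃ N : ℕ, ∀ y : ℕ, N ≤ y →
      ((p.1, y), p.2) ∈ Set.range α := by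
  obtain ⟨V, q, hV, hVinj, hVhigh, hAv⟩ := colStruct hinj hD
  intro p hp
  have : p ∈ Set.range V := by
    by_contra h
    exact hp ((hAv p).2 h)
  obtain ⟨⟨a, j⟩, rfl⟩ := this
  refine ⟨y₀ + (q (a, j)).toNat, fun y hy => ?_⟩
  set y' : ℕ := ((y : ℤ) - q (a, j)).toNat with hy'
  have hge : y₀ ≤ y' := by omega
  obtain ⟨c1, c2, c3⟩ := hV a j y' hge
  refine ⟨((a, y'), j), ?_⟩
  have h2 : (α ((a, y'), j)).1.2 = y := by
    have : ((α ((a, y'), j)).1.2 : ℤ) = y := by rw [c3]; omega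
    exact_mod_cast this
  exact Prod.ext_iff.2 ⟨Prod.ext_iff.2 ⟨c1, h2⟩, c2⟩

lemma B2a_comp {α g : QSet n → QSet n} (hinjα : Injective α) {xα yα xg yg : ℕ}
    {mα mg : Fin n → ℤ} (hDα : MData α xα yα mα) (hDg : MData g xg yg mg) :
    ∃ Y : ℕ, ∀ (x : ℕ) (i : Fin n), ∃ (q : ℤ) (x' : ℕ) (i' : Fin n), ∀ y : ℕ, Y ≤ y →
      (g (α ((x, y), i))).1.1 = x' ∧ (g (α ((x, y), i))).2 = i' ∧
      ((g (α ((x, y), i))).1.2 : ℤ) = (y : ℤ) + q := by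
  classical
  obtain ⟨V, q, hV, hVinj, hVhigh, hAv⟩ := colStruct hinjα hDα
  set QB := ((Finset.range xα ×ˢ (Finset.univ : Finset (Fin n))).sup
      fun p => (q p).natAbs) ⊔ ((Finset.univ : Finset (Fin n)).sup
      fun j => (mα j).natAbs) with hQBdef
  have hQB : ∀ p : ℕ × Fin n, (q p).natAbs ≤ QB := by
    rintro ⟨a, j⟩
    by_cases ha : a < xα
    · exact le_trans (Finset.le_sup (f := fun p => (q p).natAbs)
        (Finset.mem_product.2 ⟨Finset.mem_range.2 ha, Finset.mem_univ _⟩)) le_sup_left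
    · push_neg at ha
      have := (hVhigh a j ha).2.2
      rw [show q (a, j) = mα j from this]
      exact le_trans (Finset.le_sup (f := fun j => (mα j).natAbs)
        (Finset.mem_univ _)) le_sup_right
  choose qg xg' ig' hqg using hDg.2.1
  refine ⟨yα + yg + QB, ?_⟩
  intro x i
  refine ⟨q (x, i) + qg (V (x, i)).1 (V (x, i)).2, xg' (V (x, i)).1 (V (x, i)).2,
    ig' (V (x, i)).1 (V (x, i)).2, ?_⟩
  intro y hy
  obtain ⟨c1, c2, c3⟩ := hV x i y (by omega)
  have hge : yg ≤ (α ((x, y), i)).1.2 := by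
    have := hQB (x, i)
    omega
  have heq : α ((x, y), i) = (((V (x, i)).1, (α ((x, y), i)).1.2), (V (x, i)).2) :=
    Prod.ext_iff.2 ⟨Prod.ext_iff.2 ⟨c1, rfl⟩, c2⟩
  rw [heq]
  obtain ⟨d1, d2, d3⟩ := hqg (V (x, i)).1 (V (x, i)).2 _ hge
  exact ⟨d1, d2, by rw [d3]; omega⟩

lemma MData_comp {α g : QSet n → QSet n} (hinjα : Injective α) {xα yα xg yg : ℕ}
    {mα mg : Fin n → ℤ} (hDα : MData α xα yα mα) (hDg : MData g xg yg mg) :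
    ∃ X Y : ℕ, MData (fun s => g (α s)) X Y (fun i => mα i + mg i) := by
  classical
  obtain ⟨Y1, hB2a⟩ := B2a_comp hinjα hDα hDg
  obtain ⟨X1, hB2b⟩ := B2a_comp (injective_conj hinjα) (MData_conj hDα) (MData_conj hDg)
  set K := (Finset.univ : Finset (Fin n)).sup fun i => (-(mα i)).toNat with hK
  refine ⟨xα + xg + K + X1, yα + yg + K + Y1, ?_, ?_, ?_⟩
  · intro x y i hx hy
    have hKi : (-(mα i)).toNat ≤ K := Finset.le_sup (f := fun i => (-(mα i)).toNat)
      (Finset.mem_univ i)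
    obtain ⟨a1, a2, a3⟩ := hDα.1 x y i (by omega) (by omega)
    set P := α ((x, y), i) with hP
    obtain ⟨b1, b2, b3⟩ := hDg.1 P.1.1 P.1.2 P.2 (by omega) (by omega)
    rw [a1] at b1 b2 b3
    refine ⟨?_, ?_, ?_⟩
    · show (g ((P.1.1, P.1.2), P.2)).2 = i
      rw [a1]; exact b1
    · show ((g ((P.1.1, P.1.2), P.2)).1.1 : ℤ) = (x : ℤ) + (mα i + mg i)
      rw [a1]; omega
    · show ((g ((P.1.1, P.1.2), P.2)).1.2 : ℤ) = (y : ℤ) + (mα i + mg i)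
      rw [a1]; omega
  · intro x i
    obtain ⟨qq, x', i', h⟩ := hB2a x i
    exact ⟨qq, x', i', fun y hy => h y (by omega)⟩
  · intro y i
    obtain ⟨qq, x', i', h⟩ := hB2b y i
    exact ⟨qq, x', i', fun x hx =>
      ⟨(h x (by omega)).1, (h x (by omega)).2.1, (h x (by omega)).2.2⟩⟩

lemma MCond_iff {g : QSet n → QSet n} :
    MCond g ↔ Injective g ∧ ∃ (x₀ y₀ : ℕ) (m : Fin n → ℤ), MData g x₀ y₀ m := Iff.rfl

lemma gr_zero_of_surj {g : QSet n → QSet n} (hsurj : Surjective g) : gr g = 0 := by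
  rw [gr_eq_ncard]
  have : Avoid g = (∅ : Set (ℕ × Fin n)) := by
    ext p
    simp only [Set.mem_empty_iff_false, iff_false]
    rintro ⟨N, hN⟩
    exact hN N le_rfl (hsurj _)
  rw [this]
  simp

lemma gr_comp_eq {α g : QSet n → QSet n} (hα : MCond α) (hg : MCond g)
    (hsurj : Surjective g) : gr (fun s => g (α s)) = gr α := by
  obtain ⟨hiα, xα, yα, mα, hDα⟩ := hα
  obtain ⟨hig, xg, yg, mg, hDg⟩ := hg
  obtain ⟨X, Y, hDc⟩ := MData_comp hiα hDα hDg
  have hic : Injective (fun s => g (α s)) := hig.comp hiα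
  have h1 := (grm hic hDc).2
  have h2 := (grm hiα hDα).2
  have h3 := (grm hig hDg).2
  have h4 : gr g = 0 := gr_zero_of_surj hsurj
  rw [gr_eq_ncard] at h4
  have hsum : ∑ i : Fin n, (mα i + mg i) = ∑ i : Fin n, mα i + ∑ i : Fin n, mg i :=
    Finset.sum_add_distrib
  have : (Nat.card (Avoid fun s => g (α s)) : ℤ) = (Nat.card (Avoid α) : ℤ) := by
    rw [h1, h2, hsum]
    omega
  rw [gr_eq_ncard, gr_eq_ncard]
  exact_mod_cast this

def RAux (α : QSet n → QSet n) (Xs Ys e : ℕ) (v : ℕ × Fin n) : Set (QSet n) :=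
  {s | s ∉ Set.range α ∧ s.1.1 < Xs ∧ s.1.2 < Ys} ∪
  {s | (s.1.1, s.2) = v ∧ Ys ≤ s.1.2 ∧ s.1.2 < Ys + e}

noncomputable def gAux (α β : QSet n → QSet n) (Xs Ys e₁ e₂ : ℕ)
    (σ τ : ℕ × Fin n → ℕ × Fin n) (v₁ w₁ : ℕ × Fin n) (ρf : QSet n → QSet n) :
    QSet n → QSet n := fun s =>
  if hr : ∃ t, α t = s then β (Classical.choose hr)
  else if (s.1.1, s.2) ∈ Avoid α ∧ Ys ≤ s.1.2 then
    if (s.1.1, s.2) = v₁ then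
      (if Ys + e₁ ≤ s.1.2 then ((w₁.1, s.1.2 - e₁ + e₂), w₁.2) else ρf s)
    else (((σ (s.1.1, s.2)).1, s.1.2), (σ (s.1.1, s.2)).2)
  else if (s.1.2, s.2) ∈ AvoidH α ∧ Xs ≤ s.1.1 then
    ((s.1.1, (τ (s.1.2, s.2)).1), (τ (s.1.2, s.2)).2)
  else ρf s

lemma gAux_range {α β : QSet n → QSet n} (hiα : Injective α)
    (Xs Ys e₁ e₂ : ℕ) (σ τ : ℕ × Fin n → ℕ × Fin n) (v₁ w₁ : ℕ × Fin n)
    (ρf : QSet n → QSet n) (t : QSet n) :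
    gAux α β Xs Ys e₁ e₂ σ τ v₁ w₁ ρf (α t) = β t := by
  have hr : ∃ u, α u = α t := ⟨t, rfl⟩
  rw [gAux, dif_pos hr]
  exact congrArg β (hiα (Classical.choose_spec hr))

lemma gAux_notrange {α β : QSet n → QSet n}
    {Xs Ys e₁ e₂ : ℕ} {σ τ : ℕ × Fin n → ℕ × Fin n} {v₁ w₁ : ℕ × Fin n}
    {ρf : QSet n → QSet n} {s : QSet n} (hs : s ∉ Set.range α) :
    gAux α β Xs Ys e₁ e₂ σ τ v₁ w₁ ρf s =
      if (s.1.1, s.2) ∈ Avoid α ∧ Ys ≤ s.1.2 then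
        if (s.1.1, s.2) = v₁ then
          (if Ys + e₁ ≤ s.1.2 then ((w₁.1, s.1.2 - e₁ + e₂), w₁.2) else ρf s)
        else (((σ (s.1.1, s.2)).1, s.1.2), (σ (s.1.1, s.2)).2)
      else if (s.1.2, s.2) ∈ AvoidH α ∧ Xs ≤ s.1.1 then
        ((s.1.1, (τ (s.1.2, s.2)).1), (τ (s.1.2, s.2)).2)
      else ρf s := by
  have hr : ¬ ∃ t, α t = s := fun ⟨t, ht⟩ => hs ⟨t, ht⟩
  rw [gAux, dif_neg hr]

lemma gAux_leftInv {α β : QSet n → QSet n} {Xs Ys e₁ e₂ : ℕ}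
    {σ τ σ' τ' : ℕ × Fin n → ℕ × Fin n} {v₁ w₁ : ℕ × Fin n} {ρf ρf' : QSet n → QSet n}
    (hiα : Injective α) (hiβ : Injective β)
    (hv₁ : v₁ ∈ Avoid α) (hw₁ : w₁ ∈ Avoid β)
    (hA2 : ∀ p ∈ Avoid β, ∀ y : ℕ, Ys ≤ y → ((p.1, y), p.2) ∉ Set.range β)
    (hA3 : ∀ p ∈ AvoidH β, ∀ x : ℕ, Xs ≤ x → ((x, p.1), p.2) ∉ Set.range β)
    (hA4 : ∀ s : QSet n, s ∉ Set.range α → Ys ≤ s.1.2 → (s.1.1, s.2) ∈ Avoid α)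
    (hA5 : ∀ s : QSet n, s ∉ Set.range α → Xs ≤ s.1.1 → (s.1.2, s.2) ∈ AvoidH α)
    (hA6 : ∀ p ∈ Avoid β, p.1 < Xs)
    (hσ1 : ∀ p ∈ Avoid α, σ p ∈ Avoid β)
    (hσ2 : ∀ p ∈ Avoid α, σ' (σ p) = p)
    (hσ3 : ∀ p ∈ Avoid α, p ≠ v₁ → σ p ≠ w₁)
    (hτ1 : ∀ p ∈ AvoidH α, τ p ∈ AvoidH β)
    (hτ2 : ∀ p ∈ AvoidH α, τ' (τ p) = p)
    (hρ1 : ∀ s ∈ RAux α Xs Ys e₁ v₁, ρf s ∈ RAux β Xs Ys e₂ w₁)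
    (hρ2 : ∀ s ∈ RAux α Xs Ys e₁ v₁, ρf' (ρf s) = s) :
    ∀ s, gAux β α Xs Ys e₂ e₁ σ' τ' w₁ v₁ ρf' (gAux α β Xs Ys e₁ e₂ σ τ v₁ w₁ ρf s) = s := by
  classical
  -- membership of RAux β in the complement of range β
  have hRc : ∀ s ∈ RAux β Xs Ys e₂ w₁, s ∉ Set.range β := by
    rintro s (hs | hs)
    · exact hs.1
    · intro hr
      refine hA2 _ hw₁ s.1.2 hs.2.1 ?_
      rw [← hs.1]
      exact hr
  -- routing through the ρ-part on the β side
  have hRoute : ∀ u ∈ RAux β Xs Ys e₂ w₁,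
      gAux β α Xs Ys e₂ e₁ σ' τ' w₁ v₁ ρf' u = ρf' u := by
    intro u hu
    rw [gAux_notrange (hRc u hu)]
    rcases hu with hu | hu
    · obtain ⟨hu1, hu2, hu3⟩ := hu
      have hc1 : ¬ ((u.1.1, u.2) ∈ Avoid β ∧ Ys ≤ u.1.2) := by rintro ⟨-, hx⟩; omega
      have hc2 : ¬ ((u.1.2, u.2) ∈ AvoidH β ∧ Xs ≤ u.1.1) := by rintro ⟨-, hx⟩; omega
      rw [if_neg hc1, if_neg hc2]
    · obtain ⟨he, hy1, hy2⟩ := hu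
      rw [if_pos ⟨by rw [he]; exact hw₁, hy1⟩, if_pos he, if_neg (by omega)]
  intro s
  by_cases hs : s ∈ Set.range α
  · obtain ⟨t, rfl⟩ := hs
    rw [gAux_range hiα]
    exact gAux_range hiβ _ _ _ _ _ _ _ _ _ t
  · rw [gAux_notrange hs]
    by_cases hv : (s.1.1, s.2) ∈ Avoid α ∧ Ys ≤ s.1.2
    · rw [if_pos hv]
      by_cases hveq : (s.1.1, s.2) = v₁
      · rw [if_pos hveq]
        by_cases hhigh : Ys + e₁ ≤ s.1.2
        · rw [if_pos hhigh]
          set u : QSet n := ((w₁.1, s.1.2 - e₁ + e₂), w₁.2) with hu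
          have hunr : u ∉ Set.range β := by
            have := hA2 w₁ hw₁ (s.1.2 - e₁ + e₂) (by omega)
            rw [hu]
            rw [show ((w₁.1, s.1.2 - e₁ + e₂), w₁.2) = ((w₁.1, s.1.2 - e₁ + e₂), w₁.2)
              from rfl]
            exact this
          rw [gAux_notrange hunr]
          have hcol : (u.1.1, u.2) = w₁ := rfl
          rw [if_pos (⟨by rw [hcol]; exact hw₁, by show Ys ≤ s.1.2 - e₁ + e₂; omega⟩ :
              (u.1.1, u.2) ∈ Avoid β ∧ Ys ≤ u.1.2),
            if_pos hcol, if_pos (by show Ys + e₂ ≤ s.1.2 - e₁ + e₂; omega)]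
          show ((v₁.1, s.1.2 - e₁ + e₂ - e₂ + e₁), v₁.2) = s
          have h1 : s.1.2 - e₁ + e₂ - e₂ + e₁ = s.1.2 := by omega
          rw [h1, ← hveq]
        · rw [if_neg hhigh]
          have hmem : s ∈ RAux α Xs Ys e₁ v₁ := Or.inr ⟨hveq, hv.2, by omega⟩
          rw [hRoute _ (hρ1 s hmem)]
          exact hρ2 s hmem
      · rw [if_neg hveq]
        set p : ℕ × Fin n := (s.1.1, s.2) with hp
        set u : QSet n := (((σ p).1, s.1.2), (σ p).2) with hu
        have hσp : σ p ∈ Avoid β := hσ1 p hv.1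
        have hunr : u ∉ Set.range β := hA2 (σ p) hσp s.1.2 hv.2
        rw [gAux_notrange hunr]
        have hcol : (u.1.1, u.2) = σ p := rfl
        rw [if_pos (⟨by rw [hcol]; exact hσp, hv.2⟩ : (u.1.1, u.2) ∈ Avoid β ∧ Ys ≤ u.1.2),
          if_neg (by rw [hcol]; exact hσ3 p hv.1 hveq)]
        show (((σ' (σ p)).1, s.1.2), (σ' (σ p)).2) = s
        rw [hσ2 p hv.1]
    · rw [if_neg hv]
      by_cases hh : (s.1.2, s.2) ∈ AvoidH α ∧ Xs ≤ s.1.1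
      · rw [if_pos hh]
        set r : ℕ × Fin n := (s.1.2, s.2) with hr
        set u : QSet n := ((s.1.1, (τ r).1), (τ r).2) with hu
        have hτr : τ r ∈ AvoidH β := hτ1 r hh.1
        have hunr : u ∉ Set.range β := hA3 (τ r) hτr s.1.1 hh.2
        rw [gAux_notrange hunr]
        have hc1 : ¬ ((u.1.1, u.2) ∈ Avoid β ∧ Ys ≤ u.1.2) := by
          rintro ⟨hmem, -⟩
          have h6 : s.1.1 < Xs := hA6 _ hmem
          omega
        have hc2 : (u.1.2, u.2) ∈ AvoidH β ∧ Xs ≤ u.1.1 := ⟨hτr, hh.2⟩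
        rw [if_neg hc1, if_pos hc2]
        show ((s.1.1, (τ' (τ r)).1), (τ' (τ r)).2) = s
        rw [hτ2 r hh.1]
      · rw [if_neg hh]
        have hmem : s ∈ RAux α Xs Ys e₁ v₁ := by
          left
          refine ⟨hs, ?_, ?_⟩
          · by_contra hge
            push_neg at hge
            exact hh ⟨hA5 s hs hge, hge⟩
          · by_contra hge
            push_neg at hge
            exact hv ⟨hA4 s hs hge, hge⟩
        rw [hRoute _ (hρ1 s hmem)]
        exact hρ2 s hmem

set_option maxHeartbeats 2000000 in
lemma orbit_core (hn : 0 < n) {α β : QSet n → QSet n} (hα : MCond α) (hβ : MCond β)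
    (hgr : gr α = gr β) (hge : n ≤ gr α) :
    ∃ g : QSet n → QSet n, MCond g ∧ Function.Bijective g ∧ ∀ s, g (α s) = β s := by
  classical
  obtain ⟨hiα, xα, yα, mα, hDα'⟩ := hα
  have hDα : MData α xα yα mα := hDα'
  obtain ⟨hiβ, xβ, yβ, mβ, hDβ'⟩ := hβ
  have hDβ : MData β xβ yβ mβ := hDβ'
  obtain ⟨Vα, qα, hVα, hVαinj, hVαhigh, hAvα⟩ := colStruct hiα hDα
  obtain ⟨Vβ, qβ, hVβ, hVβinj, hVβhigh, hAvβ⟩ := colStruct hiβ hDβ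
  have hiαc : Injective (conj α) := injective_conj hiα
  have hiβc : Injective (conj β) := injective_conj hiβ
  have hDαc := MData_conj hDα
  have hDβc := MData_conj hDβ
  obtain ⟨Hα, rα, hHα, hHαinj, hHαhigh, hAvHα⟩ := colStruct hiαc hDαc
  obtain ⟨Hβ, rβ, hHβ, hHβinj, hHβhigh, hAvHβ⟩ := colStruct hiβc hDβc
  obtain ⟨QA, hQA⟩ := qbound qα (fun a j ha => (hVαhigh a j ha).2.2)
  obtain ⟨QB, hQB⟩ := qbound qβ (fun a j ha => (hVβhigh a j ha).2.2)
  obtain ⟨RA, hRA⟩ := qbound rα (fun a j ha => (hHαhigh a j ha).2.2)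
  obtain ⟨RB, hRB⟩ := qbound rβ (fun a j ha => (hHβhigh a j ha).2.2)
  obtain ⟨hfinA, hcardA⟩ := grm hiα hDα
  obtain ⟨hfinB, hcardB⟩ := grm hiβ hDβ
  obtain ⟨hfinHA, hcardHA⟩ := grm hiαc hDαc
  obtain ⟨hfinHB, hcardHB⟩ := grm hiβc hDβc
  have hgr' : Nat.card (Avoid α) = Nat.card (Avoid β) := by
    rw [← gr_eq_ncard, ← gr_eq_ncard]; exact hgr
  have hgrH : Nat.card (AvoidH α) = Nat.card (AvoidH β) := by
    have h : (Nat.card (Avoid (conj α)) : ℤ) = (Nat.card (Avoid (conj β)) : ℤ) := by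
      rw [hcardHA, hcardHB, ← hcardA, ← hcardB]
      exact_mod_cast hgr'
    exact_mod_cast h
  -- a nonempty avoided column
  have hA_ne : (Avoid α).Nonempty := by
    by_contra h
    rw [Set.not_nonempty_iff_eq_empty] at h
    rw [gr_eq_ncard, h] at hge
    simp at hge
    omega
  obtain ⟨v₁, hv₁⟩ := hA_ne
  -- the matchings of avoided columns and rows
  haveI fA := hfinA.fintype
  haveI fB := hfinB.fintype
  haveI fHA := hfinHA.fintype
  haveI fHB := hfinHB.fintype
  haveI : Fintype ↥(AvoidH α) := fHA
  haveI : Fintype ↥(AvoidH β) := fHB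
  have σ0 : ↥(Avoid α) ≃ ↥(Avoid β) := Fintype.equivOfCardEq (by
    rw [← Nat.card_eq_fintype_card, ← Nat.card_eq_fintype_card]; exact hgr')
  have τ0 : ↥(AvoidH α) ≃ ↥(AvoidH β) := Fintype.equivOfCardEq (by
    rw [← Nat.card_eq_fintype_card, ← Nat.card_eq_fintype_card]
    exact hgrH)
  set σ : ℕ × Fin n → ℕ × Fin n := fun p => if h : p ∈ Avoid α then (σ0 ⟨p, h⟩ : ℕ × Fin n)
    else p with hσdef
  set σ' : ℕ × Fin n → ℕ × Fin n := fun p => if h : p ∈ Avoid β then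
    (σ0.symm ⟨p, h⟩ : ℕ × Fin n) else p with hσ'def
  set τ : ℕ × Fin n → ℕ × Fin n := fun p => if h : p ∈ AvoidH α then (τ0 ⟨p, h⟩ : ℕ × Fin n)
    else p with hτdef
  set τ' : ℕ × Fin n → ℕ × Fin n := fun p => if h : p ∈ AvoidH β then
    (τ0.symm ⟨p, h⟩ : ℕ × Fin n) else p with hτ'def
  have hσ1 : ∀ p ∈ Avoid α, σ p ∈ Avoid β := by
    intro p h
    rw [hσdef]
    simp only [dif_pos h]
    exact (σ0 ⟨p, h⟩).2
  have hσ1' : ∀ p ∈ Avoid β, σ' p ∈ Avoid α := by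
    intro p h
    rw [hσ'def]
    simp only [dif_pos h]
    exact (σ0.symm ⟨p, h⟩).2
  have hσ2 : ∀ p ∈ Avoid α, σ' (σ p) = p := by
    intro p h
    rw [hσdef, hσ'def]
    simp only [dif_pos h]
    rw [dif_pos (σ0 ⟨p, h⟩).2]
    rw [show (⟨(σ0 ⟨p, h⟩ : ℕ × Fin n), (σ0 ⟨p, h⟩).2⟩ : ↥(Avoid β)) = σ0 ⟨p, h⟩ from rfl,
      Equiv.symm_apply_apply]
  have hσ2' : ∀ p ∈ Avoid β, σ (σ' p) = p := by
    intro p h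
    rw [hσdef, hσ'def]
    simp only [dif_pos h]
    rw [dif_pos (σ0.symm ⟨p, h⟩).2]
    rw [show (⟨(σ0.symm ⟨p, h⟩ : ℕ × Fin n), (σ0.symm ⟨p, h⟩).2⟩ : ↥(Avoid α)) =
      σ0.symm ⟨p, h⟩ from rfl, Equiv.apply_symm_apply]
  have hτ1 : ∀ p ∈ AvoidH α, τ p ∈ AvoidH β := by
    intro p h
    rw [hτdef]
    simp only [dif_pos h]
    exact (τ0 ⟨p, h⟩).2
  have hτ1' : ∀ p ∈ AvoidH β, τ' p ∈ AvoidH α := by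
    intro p h
    rw [hτ'def]
    simp only [dif_pos h]
    exact (τ0.symm ⟨p, h⟩).2
  have hτ2 : ∀ p ∈ AvoidH α, τ' (τ p) = p := by
    intro p h
    rw [hτdef, hτ'def]
    simp only [dif_pos h]
    rw [dif_pos (τ0 ⟨p, h⟩).2]
    rw [show (⟨(τ0 ⟨p, h⟩ : ℕ × Fin n), (τ0 ⟨p, h⟩).2⟩ : ↥(AvoidH β)) = τ0 ⟨p, h⟩ from rfl,
      Equiv.symm_apply_apply]
  have hτ2' : ∀ p ∈ AvoidH β, τ (τ' p) = p := by
    intro p h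
    rw [hτdef, hτ'def]
    simp only [dif_pos h]
    rw [dif_pos (τ0.symm ⟨p, h⟩).2]
    rw [show (⟨(τ0.symm ⟨p, h⟩ : ℕ × Fin n), (τ0.symm ⟨p, h⟩).2⟩ : ↥(AvoidH α)) =
      τ0.symm ⟨p, h⟩ from rfl, Equiv.apply_symm_apply]
  set w₁ : ℕ × Fin n := σ v₁ with hw₁def
  have hw₁ : w₁ ∈ Avoid β := hσ1 v₁ hv₁
  have hσ3 : ∀ p ∈ Avoid α, p ≠ v₁ → σ p ≠ w₁ := by
    intro p h hne he
    refine hne ?_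
    rw [← hσ2 p h, he, hw₁def, hσ2 v₁ hv₁]
  have hσ3' : ∀ p ∈ Avoid β, p ≠ w₁ → σ' p ≠ v₁ := by
    intro p h hne he
    refine hne ?_
    rw [← hσ2' p h, he]
  -- thresholds
  set KA : ℕ := (Finset.univ : Finset (Fin n)).sup (fun i => (mα i).toNat) with hKAdef
  set KB : ℕ := (Finset.univ : Finset (Fin n)).sup (fun i => (mβ i).toNat) with hKBdef
  have hKA : ∀ i : Fin n, (mα i).toNat ≤ KA := fun i =>
    Finset.le_sup (f := fun i => (mα i).toNat) (Finset.mem_univ i)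
  have hKB : ∀ i : Fin n, (mβ i).toNat ≤ KB := fun i =>
    Finset.le_sup (f := fun i => (mβ i).toNat) (Finset.mem_univ i)
  set XA : ℕ := xα + xβ + KA + KB + 1 with hXAdef
  set YA : ℕ := yα + yβ + KA + KB + 1 with hYAdef
  -- tail starts
  set Mv : ℕ × Fin n → ℕ := fun p => if h : p ∈ Avoid α then h.choose else 0 with hMvdef
  have hMv : ∀ p, p ∈ Avoid α → ∀ y : ℕ, Mv p ≤ y → ((p.1, y), p.2) ∉ Set.range α := by
    intro p h
    rw [hMvdef]
    simp only [dif_pos h]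
    exact h.choose_spec
  set Mw : ℕ × Fin n → ℕ := fun p => if h : p ∈ Avoid β then h.choose else 0 with hMwdef
  have hMw : ∀ p, p ∈ Avoid β → ∀ y : ℕ, Mw p ≤ y → ((p.1, y), p.2) ∉ Set.range β := by
    intro p h
    rw [hMwdef]
    simp only [dif_pos h]
    exact h.choose_spec
  set Mh : ℕ × Fin n → ℕ := fun p => if h : p ∈ AvoidH α then (mem_AvoidH.1 h).choose
    else 0 with hMhdef
  have hMh : ∀ p, p ∈ AvoidH α → ∀ x : ℕ, Mh p ≤ x → ((x, p.1), p.2) ∉ Set.range α := by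
    intro p h
    rw [hMhdef]
    simp only [dif_pos h]
    exact (mem_AvoidH.1 h).choose_spec
  set Mi : ℕ × Fin n → ℕ := fun p => if h : p ∈ AvoidH β then (mem_AvoidH.1 h).choose
    else 0 with hMidef
  have hMi : ∀ p, p ∈ AvoidH β → ∀ x : ℕ, Mi p ≤ x → ((x, p.1), p.2) ∉ Set.range β := by
    intro p h
    rw [hMidef]
    simp only [dif_pos h]
    exact (mem_AvoidH.1 h).choose_spec
  -- fill bounds for non-avoided columns and rows
  have hcfα := colFill hiα hDα
  have hcfβ := colFill hiβ hDβ
  have hrfα : ∀ p : ℕ × Fin n, p ∉ AvoidH α → ∃ N : ℕ, ∀ x : ℕ, N ≤ x →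
      ((x, p.1), p.2) ∈ Set.range α := by
    intro p h
    obtain ⟨N, hN⟩ := colFill hiαc hDαc p h
    exact ⟨N, fun x hx => mem_range_conj.1 (hN x hx)⟩
  have hrfβ : ∀ p : ℕ × Fin n, p ∉ AvoidH β → ∃ N : ℕ, ∀ x : ℕ, N ≤ x →
      ((x, p.1), p.2) ∈ Set.range β := by
    intro p h
    obtain ⟨N, hN⟩ := colFill hiβc hDβc p h
    exact ⟨N, fun x hx => mem_range_conj.1 (hN x hx)⟩
  set Nv : ℕ × Fin n → ℕ := fun p => if h : p ∉ Avoid α then (hcfα p h).choose else 0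
    with hNvdef
  have hNv : ∀ p, p ∉ Avoid α → ∀ y : ℕ, Nv p ≤ y → ((p.1, y), p.2) ∈ Set.range α := by
    intro p h
    rw [hNvdef]
    simp only [dif_pos h]
    exact (hcfα p h).choose_spec
  set Nw : ℕ × Fin n → ℕ := fun p => if h : p ∉ Avoid β then (hcfβ p h).choose else 0
    with hNwdef
  have hNw : ∀ p, p ∉ Avoid β → ∀ y : ℕ, Nw p ≤ y → ((p.1, y), p.2) ∈ Set.range β := by
    intro p h
    rw [hNwdef]
    simp only [dif_pos h]
    exact (hcfβ p h).choose_spec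
  set Nh : ℕ × Fin n → ℕ := fun p => if h : p ∉ AvoidH α then (hrfα p h).choose else 0
    with hNhdef
  have hNh : ∀ p, p ∉ AvoidH α → ∀ x : ℕ, Nh p ≤ x → ((x, p.1), p.2) ∈ Set.range α := by
    intro p h
    rw [hNhdef]
    simp only [dif_pos h]
    exact (hrfα p h).choose_spec
  set Ni : ℕ × Fin n → ℕ := fun p => if h : p ∉ AvoidH β then (hrfβ p h).choose else 0
    with hNidef
  have hNi : ∀ p, p ∉ AvoidH β → ∀ x : ℕ, Ni p ≤ x → ((x, p.1), p.2) ∈ Set.range β := by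
    intro p h
    rw [hNidef]
    simp only [dif_pos h]
    exact (hrfβ p h).choose_spec
  -- the big thresholds
  set Ys : ℕ := YA + hfinA.toFinset.sup Mv + hfinB.toFinset.sup Mw +
    (Finset.range XA ×ˢ (Finset.univ : Finset (Fin n))).sup Nv +
    (Finset.range XA ×ˢ (Finset.univ : Finset (Fin n))).sup Nw with hYsdef
  set Xs : ℕ := XA + hfinHA.toFinset.sup Mh + hfinHB.toFinset.sup Mi +
    (Finset.range YA ×ˢ (Finset.univ : Finset (Fin n))).sup Nh +
    (Finset.range YA ×ˢ (Finset.univ : Finset (Fin n))).sup Ni with hXsdef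
  -- strip facts
  have hstripα : ∀ p ∈ Avoid α, p.1 < XA := by
    intro p hp
    have := avoid_strip hiα hDα p hp
    have h2 := hKA p.2
    omega
  have hstripβ : ∀ p ∈ Avoid β, p.1 < XA := by
    intro p hp
    have := avoid_strip hiβ hDβ p hp
    have h2 := hKB p.2
    omega
  have hstripHα : ∀ p ∈ AvoidH α, p.1 < YA := by
    intro p hp
    have := avoid_strip hiαc hDαc p hp
    have h2 := hKA p.2
    omega
  have hstripHβ : ∀ p ∈ AvoidH β, p.1 < YA := by
    intro p hp
    have := avoid_strip hiβc hDβc p hp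
    have h2 := hKB p.2
    omega
  -- the main complement facts
  have hA2α : ∀ p ∈ Avoid α, ∀ y : ℕ, Ys ≤ y → ((p.1, y), p.2) ∉ Set.range α := by
    intro p hp y hy
    have h1 : Mv p ≤ hfinA.toFinset.sup Mv :=
      Finset.le_sup (Set.Finite.mem_toFinset hfinA |>.2 hp)
    exact hMv p hp y (by omega)
  have hA2β : ∀ p ∈ Avoid β, ∀ y : ℕ, Ys ≤ y → ((p.1, y), p.2) ∉ Set.range β := by
    intro p hp y hy
    have h1 : Mw p ≤ hfinB.toFinset.sup Mw :=
      Finset.le_sup (Set.Finite.mem_toFinset hfinB |>.2 hp)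
    exact hMw p hp y (by omega)
  have hA3α : ∀ p ∈ AvoidH α, ∀ x : ℕ, Xs ≤ x → ((x, p.1), p.2) ∉ Set.range α := by
    intro p hp x hx
    have h1 : Mh p ≤ hfinHA.toFinset.sup Mh :=
      Finset.le_sup (Set.Finite.mem_toFinset hfinHA |>.2 hp)
    exact hMh p hp x (by omega)
  have hA3β : ∀ p ∈ AvoidH β, ∀ x : ℕ, Xs ≤ x → ((x, p.1), p.2) ∉ Set.range β := by
    intro p hp x hx
    have h1 : Mi p ≤ hfinHB.toFinset.sup Mi :=
      Finset.le_sup (Set.Finite.mem_toFinset hfinHB |>.2 hp)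
    exact hMi p hp x (by omega)
  have hA4α : ∀ s : QSet n, s ∉ Set.range α → Ys ≤ s.1.2 → (s.1.1, s.2) ∈ Avoid α := by
    intro s hs hy
    by_contra h
    by_cases hx : s.1.1 < XA
    · have h1 : Nv (s.1.1, s.2) ≤ (Finset.range XA ×ˢ
          (Finset.univ : Finset (Fin n))).sup Nv :=
        Finset.le_sup (Finset.mem_product.2 ⟨Finset.mem_range.2 hx, Finset.mem_univ _⟩)
      have := hNv (s.1.1, s.2) h s.1.2 (by omega)
      exact hs this
    · push_neg at hx
      have h2 := hKA s.2
      have := B1_point hDα s.1.1 s.1.2 s.2 (by omega) (by omega)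
      exact hs ⟨_, this⟩
  have hA4β : ∀ s : QSet n, s ∉ Set.range β → Ys ≤ s.1.2 → (s.1.1, s.2) ∈ Avoid β := by
    intro s hs hy
    by_contra h
    by_cases hx : s.1.1 < XA
    · have h1 : Nw (s.1.1, s.2) ≤ (Finset.range XA ×ˢ
          (Finset.univ : Finset (Fin n))).sup Nw :=
        Finset.le_sup (Finset.mem_product.2 ⟨Finset.mem_range.2 hx, Finset.mem_univ _⟩)
      have := hNw (s.1.1, s.2) h s.1.2 (by omega)
      exact hs this
    · push_neg at hx
      have h2 := hKB s.2
      have := B1_point hDβ s.1.1 s.1.2 s.2 (by omega) (by omega)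
      exact hs ⟨_, this⟩
  have hA5α : ∀ s : QSet n, s ∉ Set.range α → Xs ≤ s.1.1 → (s.1.2, s.2) ∈ AvoidH α := by
    intro s hs hx
    by_contra h
    by_cases hy : s.1.2 < YA
    · have h1 : Nh (s.1.2, s.2) ≤ (Finset.range YA ×ˢ
          (Finset.univ : Finset (Fin n))).sup Nh :=
        Finset.le_sup (Finset.mem_product.2 ⟨Finset.mem_range.2 hy, Finset.mem_univ _⟩)
      have := hNh (s.1.2, s.2) h s.1.1 (by omega)
      exact hs this
    · push_neg at hy
      have h2 := hKA s.2
      have := B1_point hDα s.1.1 s.1.2 s.2 (by omega) (by omega)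
      exact hs ⟨_, this⟩
  have hA5β : ∀ s : QSet n, s ∉ Set.range β → Xs ≤ s.1.1 → (s.1.2, s.2) ∈ AvoidH β := by
    intro s hs hx
    by_contra h
    by_cases hy : s.1.2 < YA
    · have h1 : Ni (s.1.2, s.2) ≤ (Finset.range YA ×ˢ
          (Finset.univ : Finset (Fin n))).sup Ni :=
        Finset.le_sup (Finset.mem_product.2 ⟨Finset.mem_range.2 hy, Finset.mem_univ _⟩)
      have := hNi (s.1.2, s.2) h s.1.1 (by omega)
      exact hs this
    · push_neg at hy
      have h2 := hKB s.2
      have := B1_point hDβ s.1.1 s.1.2 s.2 (by omega) (by omega)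
      exact hs ⟨_, this⟩
  have hA6α : ∀ p ∈ Avoid α, p.1 < Xs := fun p hp => by
    have := hstripα p hp
    omega
  have hA6β : ∀ p ∈ Avoid β, p.1 < Xs := fun p hp => by
    have := hstripβ p hp
    omega
  have hA7α : ∀ p ∈ AvoidH α, p.1 < Ys := fun p hp => by
    have := hstripHα p hp
    omega
  have hA7β : ∀ p ∈ AvoidH β, p.1 < Ys := fun p hp => by
    have := hstripHβ p hp
    omega
  -- the finite exceptional sets
  set Rα : Set (QSet n) := {s | s ∉ Set.range α ∧ s.1.1 < Xs ∧ s.1.2 < Ys} with hRαdef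
  set Rβ : Set (QSet n) := {s | s ∉ Set.range β ∧ s.1.1 < Xs ∧ s.1.2 < Ys} with hRβdef
  have hboxfin : ∀ (γ : QSet n → QSet n),
      ({s | s ∉ Set.range γ ∧ s.1.1 < Xs ∧ s.1.2 < Ys} : Set (QSet n)).Finite := by
    intro γ
    refine Set.Finite.subset (((Finset.range Xs ×ˢ Finset.range Ys) ×ˢ
      (Finset.univ : Finset (Fin n))).finite_toSet) ?_
    rintro ⟨⟨x, y⟩, i⟩ ⟨-, hx, hy⟩
    exact Finset.mem_coe.2 (Finset.mem_product.2 ⟨Finset.mem_product.2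
      ⟨Finset.mem_range.2 hx, Finset.mem_range.2 hy⟩, Finset.mem_univ _⟩)
  have hRαfin : Rα.Finite := hboxfin α
  have hRβfin : Rβ.Finite := hboxfin β
  set e₁ : ℕ := Rβ.ncard - Rα.ncard with he₁def
  set e₂ : ℕ := Rα.ncard - Rβ.ncard with he₂def
  -- the cardinality of the augmented exceptional sets
  have hExtra : ∀ (v : ℕ × Fin n) (e : ℕ),
      ({s : QSet n | (s.1.1, s.2) = v ∧ Ys ≤ s.1.2 ∧ s.1.2 < Ys + e}).ncard = e ∧
      ({s : QSet n | (s.1.1, s.2) = v ∧ Ys ≤ s.1.2 ∧ s.1.2 < Ys + e}).Finite := by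
    intro v e
    have hinj : Injective (fun y : ℕ => (((v.1, y), v.2) : QSet n)) := by
      intro a b h
      exact congrArg (fun t : QSet n => t.1.2) h
    have heq : {s : QSet n | (s.1.1, s.2) = v ∧ Ys ≤ s.1.2 ∧ s.1.2 < Ys + e} =
        (fun y : ℕ => (((v.1, y), v.2) : QSet n)) '' Set.Ico Ys (Ys + e) := by
      ext s
      constructor
      · rintro ⟨he, h1, h2⟩
        refine ⟨s.1.2, ⟨h1, h2⟩, ?_⟩
        rw [← he]
      · rintro ⟨y, hy, rfl⟩
        exact ⟨rfl, hy.1, hy.2⟩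
    constructor
    · rw [heq, Set.ncard_image_of_injective _ hinj, ← Finset.coe_Ico,
        Set.ncard_coe_finset, Nat.card_Ico]
      omega
    · rw [heq]
      exact Set.Finite.image _ (by rw [← Finset.coe_Ico]; exact (Finset.Ico _ _).finite_toSet)
  have hRAuxα_eq : RAux α Xs Ys e₁ v₁ = Rα ∪
      {s : QSet n | (s.1.1, s.2) = v₁ ∧ Ys ≤ s.1.2 ∧ s.1.2 < Ys + e₁} := rfl
  have hRAuxβ_eq : RAux β Xs Ys e₂ w₁ = Rβ ∪
      {s : QSet n | (s.1.1, s.2) = w₁ ∧ Ys ≤ s.1.2 ∧ s.1.2 < Ys + e₂} := rfl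
  have hcardRα : (RAux α Xs Ys e₁ v₁).ncard = Rα.ncard + e₁ := by
    rw [hRAuxα_eq, Set.ncard_union_eq ?_ hRαfin (hExtra v₁ e₁).2, (hExtra v₁ e₁).1]
    rw [Set.disjoint_left]
    rintro a ⟨-, -, h3⟩ ⟨-, h4, -⟩
    omega
  have hcardRβ : (RAux β Xs Ys e₂ w₁).ncard = Rβ.ncard + e₂ := by
    rw [hRAuxβ_eq, Set.ncard_union_eq ?_ hRβfin (hExtra w₁ e₂).2, (hExtra w₁ e₂).1]
    rw [Set.disjoint_left]
    rintro a ⟨-, -, h3⟩ ⟨-, h4, -⟩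
    omega
  have hRAuxαfin : (RAux α Xs Ys e₁ v₁).Finite := by
    rw [hRAuxα_eq]
    exact Set.Finite.union hRαfin (hExtra v₁ e₁).2
  have hRAuxβfin : (RAux β Xs Ys e₂ w₁).Finite := by
    rw [hRAuxβ_eq]
    exact Set.Finite.union hRβfin (hExtra w₁ e₂).2
  haveI fRA := hRAuxαfin.fintype
  haveI fRB := hRAuxβfin.fintype
  have ρ0 : ↥(RAux α Xs Ys e₁ v₁) ≃ ↥(RAux β Xs Ys e₂ w₁) := Fintype.equivOfCardEq (by
    rw [← Nat.card_eq_fintype_card, ← Nat.card_eq_fintype_card,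
      Nat.card_coe_set_eq, Nat.card_coe_set_eq, hcardRα, hcardRβ]
    omega)
  set ρf : QSet n → QSet n := fun s => if h : s ∈ RAux α Xs Ys e₁ v₁ then
    (ρ0 ⟨s, h⟩ : QSet n) else s with hρfdef
  set ρf' : QSet n → QSet n := fun s => if h : s ∈ RAux β Xs Ys e₂ w₁ then
    (ρ0.symm ⟨s, h⟩ : QSet n) else s with hρf'def
  have hρ1 : ∀ s ∈ RAux α Xs Ys e₁ v₁, ρf s ∈ RAux β Xs Ys e₂ w₁ := by
    intro s h
    rw [hρfdef]
    simp only [dif_pos h]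
    exact (ρ0 ⟨s, h⟩).2
  have hρ1' : ∀ s ∈ RAux β Xs Ys e₂ w₁, ρf' s ∈ RAux α Xs Ys e₁ v₁ := by
    intro s h
    rw [hρf'def]
    simp only [dif_pos h]
    exact (ρ0.symm ⟨s, h⟩).2
  have hρ2 : ∀ s ∈ RAux α Xs Ys e₁ v₁, ρf' (ρf s) = s := by
    intro s h
    rw [hρfdef, hρf'def]
    simp only [dif_pos h]
    rw [dif_pos (ρ0 ⟨s, h⟩).2]
    rw [show (⟨(ρ0 ⟨s, h⟩ : QSet n), (ρ0 ⟨s, h⟩).2⟩ : ↥(RAux β Xs Ys e₂ w₁)) =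
      ρ0 ⟨s, h⟩ from rfl, Equiv.symm_apply_apply]
  have hρ2' : ∀ s ∈ RAux β Xs Ys e₂ w₁, ρf (ρf' s) = s := by
    intro s h
    rw [hρfdef, hρf'def]
    simp only [dif_pos h]
    rw [dif_pos (ρ0.symm ⟨s, h⟩).2]
    rw [show (⟨(ρ0.symm ⟨s, h⟩ : QSet n), (ρ0.symm ⟨s, h⟩).2⟩ : ↥(RAux α Xs Ys e₁ v₁)) =
      ρ0.symm ⟨s, h⟩ from rfl, Equiv.apply_symm_apply]
  -- the two inverse maps
  have hLI := gAux_leftInv (α := α) (β := β) (Xs := Xs) (Ys := Ys) (e₁ := e₁) (e₂ := e₂)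
    (σ := σ) (τ := τ) (σ' := σ') (τ' := τ') (v₁ := v₁) (w₁ := w₁) (ρf := ρf) (ρf' := ρf')
    hiα hiβ hv₁ hw₁ hA2β hA3β hA4α hA5α hA6β hσ1 hσ2 hσ3 hτ1 hτ2 hρ1 hρ2
  have hRI := gAux_leftInv (α := β) (β := α) (Xs := Xs) (Ys := Ys) (e₁ := e₂) (e₂ := e₁)
    (σ := σ') (τ := τ') (σ' := σ) (τ' := τ) (v₁ := w₁) (w₁ := v₁) (ρf := ρf') (ρf' := ρf)
    hiβ hiα hw₁ hv₁ hA2α hA3α hA4β hA5β hA6α hσ1' hσ2' hσ3' hτ1' hτ2' hρ1' hρ2'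
  refine ⟨gAux α β Xs Ys e₁ e₂ σ τ v₁ w₁ ρf, ⟨?_, ?_⟩, ?_, ?_⟩
  · exact Function.LeftInverse.injective hLI
  · -- the translation data for g
    set C : ℕ := Xs + Ys + XA + YA + xα + xβ + yα + yβ + KA + KB + QA + QB + RA + RB +
      e₁ + e₂ + 1 with hCdef
    refine ⟨C, C, fun i => mβ i - mα i, ?_, ?_, ?_⟩
    · -- B1
      intro x y i hx hy
      have hKAi := hKA i
      have hKBi := hKB i
      have hpt := B1_point hDα x y i (by omega) (by omega)
      have hgr2 := gAux_range (β := β) hiα Xs Ys e₁ e₂ σ τ v₁ w₁ ρf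
        ((((x : ℤ) - mα i).toNat, ((y : ℤ) - mα i).toNat), i)
      rw [hpt] at hgr2
      rw [hgr2]
      obtain ⟨b1, b2, b3⟩ := hDβ.1 (((x : ℤ) - mα i).toNat) (((y : ℤ) - mα i).toNat) i
        (by omega) (by omega)
      refine ⟨b1, ?_, ?_⟩
      · show ((β ((((x : ℤ) - mα i).toNat, ((y : ℤ) - mα i).toNat), i)).1.1 : ℤ) =
          (x : ℤ) + (mβ i - mα i)
        omega
      · show ((β ((((x : ℤ) - mα i).toNat, ((y : ℤ) - mα i).toNat), i)).1.2 : ℤ) =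
          (y : ℤ) + (mβ i - mα i)
        omega
    · -- B2a
      intro c i
      by_cases hc : ((c, i) : ℕ × Fin n) ∈ Avoid α
      · by_cases hcv : ((c, i) : ℕ × Fin n) = v₁
        · refine ⟨(e₂ : ℤ) - (e₁ : ℤ), w₁.1, w₁.2, ?_⟩
          intro y hy
          have hs : (((c, y), i) : QSet n) ∉ Set.range α := hA2α (c, i) hc y (by omega)
          rw [gAux_notrange hs, if_pos (⟨hc, by show Ys ≤ y; omega⟩ :
            ((c, i) : ℕ × Fin n) ∈ Avoid α ∧ Ys ≤ y), if_pos hcv,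
            if_pos (by show Ys + e₁ ≤ y; omega)]
          exact ⟨rfl, rfl, by show ((y - e₁ + e₂ : ℕ) : ℤ) = (y : ℤ) + ((e₂ : ℤ) - e₁); omega⟩
        · refine ⟨0, (σ (c, i)).1, (σ (c, i)).2, ?_⟩
          intro y hy
          have hs : (((c, y), i) : QSet n) ∉ Set.range α := hA2α (c, i) hc y (by omega)
          rw [gAux_notrange hs, if_pos (⟨hc, by show Ys ≤ y; omega⟩ :
            ((c, i) : ℕ × Fin n) ∈ Avoid α ∧ Ys ≤ y), if_neg hcv]
          exact ⟨rfl, rfl, by show ((y : ℕ) : ℤ) = (y : ℤ) + 0; omega⟩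
      · have hrg : ((c, i) : ℕ × Fin n) ∈ Set.range Vα := by
          by_contra h
          exact hc ((hAvα _).2 h)
        obtain ⟨⟨a, j⟩, hVeq⟩ := hrg
        refine ⟨qβ (a, j) - qα (a, j), (Vβ (a, j)).1, (Vβ (a, j)).2, ?_⟩
        intro y hy
        have hqa := hQA (a, j)
        have hqb := hQB (a, j)
        set y' : ℕ := ((y : ℤ) - qα (a, j)).toNat with hy'def
        have hy'α : yα ≤ y' := by omega
        obtain ⟨c1, c2, c3⟩ := hVα a j y' hy'α
        have hpt : α ((a, y'), j) = ((c, y), i) := by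
          have h1 : (α ((a, y'), j)).1.1 = c := by rw [c1, hVeq]
          have h2 : (α ((a, y'), j)).2 = i := by rw [c2, hVeq]
          have h3 : (α ((a, y'), j)).1.2 = y := by
            have h4 : ((α ((a, y'), j)).1.2 : ℤ) = y := by rw [c3]; omega
            exact_mod_cast h4
          exact Prod.ext_iff.2 ⟨Prod.ext_iff.2 ⟨h1, h3⟩, h2⟩
        have hgr2 := gAux_range (β := β) hiα Xs Ys e₁ e₂ σ τ v₁ w₁ ρf ((a, y'), j)
        rw [hpt] at hgr2
        rw [hgr2]
        obtain ⟨d1, d2, d3⟩ := hVβ a j y' (by omega)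
        exact ⟨d1, d2, by rw [d3]; omega⟩
    · -- B2b
      intro r i
      by_cases hr : ((r, i) : ℕ × Fin n) ∈ AvoidH α
      · refine ⟨0, (τ (r, i)).1, (τ (r, i)).2, ?_⟩
        intro x hx
        have hs : (((x, r), i) : QSet n) ∉ Set.range α := hA3α (r, i) hr x (by omega)
        rw [gAux_notrange hs]
        have hc1 : ¬ (((x, i) : ℕ × Fin n) ∈ Avoid α ∧ Ys ≤ r) := by
          rintro ⟨-, hge⟩
          have := hA7α (r, i) hr
          omega
        rw [if_neg hc1, if_pos (⟨hr, by show Xs ≤ x; omega⟩ :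
          ((r, i) : ℕ × Fin n) ∈ AvoidH α ∧ Xs ≤ x)]
        exact ⟨rfl, rfl, by show ((x : ℕ) : ℤ) = (x : ℤ) + 0; omega⟩
      · have hrg : ((r, i) : ℕ × Fin n) ∈ Set.range Hα := by
          by_contra h
          exact hr ((hAvHα _).2 h)
        obtain ⟨⟨b, j⟩, hHeq⟩ := hrg
        refine ⟨rβ (b, j) - rα (b, j), (Hβ (b, j)).1, (Hβ (b, j)).2, ?_⟩
        intro x hx
        have hra := hRA (b, j)
        have hrb := hRB (b, j)
        set x' : ℕ := ((x : ℤ) - rα (b, j)).toNat with hx'def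
        obtain ⟨c1, c2, c3⟩ := hHα b j x' (by omega)
        have hpt : α ((x', b), j) = ((x, r), i) := by
          have h1 : (α ((x', b), j)).1.2 = r := by
            rw [hHeq] at c1
            exact c1
          have h2 : (α ((x', b), j)).2 = i := by
            rw [hHeq] at c2
            exact c2
          have h3 : (α ((x', b), j)).1.1 = x := by
            have h4 : ((α ((x', b), j)).1.1 : ℤ) = (x' : ℤ) + rα (b, j) := c3
            have h5 : ((α ((x', b), j)).1.1 : ℤ) = x := by omega
            exact_mod_cast h5
          exact Prod.ext_iff.2 ⟨Prod.ext_iff.2 ⟨h3, h1⟩, h2⟩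
        have hgr2 := gAux_range (β := β) hiα Xs Ys e₁ e₂ σ τ v₁ w₁ ρf ((x', b), j)
        rw [hpt] at hgr2
        rw [hgr2]
        obtain ⟨d1, d2, d3⟩ := hHβ b j x' (by omega)
        refine ⟨d1, d2, ?_⟩
        have h6 : ((β ((x', b), j)).1.1 : ℤ) = (x' : ℤ) + rβ (b, j) := d3
        omega
  · exact ⟨Function.LeftInverse.injective hLI, Function.RightInverse.surjective hRI⟩
  · exact fun s => gAux_range hiα Xs Ys e₁ e₂ σ τ v₁ w₁ ρf s

end S13

open S13 in
/-- Two `p`-simplices `(α₀ < ⋯ < α_p)`, `(β₀ < ⋯ < β_p)` of the order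
complex of `Mⁿ = {α : gr α ≥ n}` lie in the same `Gₙ`-orbit iff `gr(α₀) = gr(β₀)` and the
tuples of connecting translations agree:
`(t_{α₁},…,t_{α_p}) = (t_{β₁},…,t_{β_p})` where `t_{α_i} α_{i−1} = α_i`. -/
theorem stmt_13 (n p : ℕ) (α β : Fin (p + 1) → MMon n)
    (hαchain : ∀ i j : Fin (p + 1), i < j → Mlt (α i) (α j))
    (hβchain : ∀ i j : Fin (p + 1), i < j → Mlt (β i) (β j))
    (hαn : ∀ j, n ≤ gr (α j).1) (hβn : ∀ j, n ≤ gr (β j).1)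
    (mα mβ : Fin p → Fin n → ℕ)
    (hmα : ∀ i : Fin p, ∀ s, (α i.castSucc).1 (translMap (mα i) s) = (α i.succ).1 s)
    (hmβ : ∀ i : Fin p, ∀ s, (β i.castSucc).1 (translMap (mβ i) s) = (β i.succ).1 s) :
    (∃ g : QSet n → QSet n, MCond g ∧ Function.Bijective g ∧
        ∀ j s, g ((α j).1 s) = (β j).1 s) ↔
      gr (α 0).1 = gr (β 0).1 ∧ mα = mβ := by
  constructor
  · rintro ⟨g, hgM, hgbij, hg⟩
    constructor
    · have h0 : (β 0).1 = fun s => g ((α 0).1 s) := funext fun s => (hg 0 s).symm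
      rw [h0]
      exact (gr_comp_eq (α 0).2 hgM hgbij.surjective).symm
    · funext i
      have e1 : ∀ s, (β i.castSucc).1 (translMap (mα i) s) = (β i.succ).1 s := by
        intro s
        rw [← hg i.succ s, ← hmα i s, hg i.castSucc _]
      funext k
      have e2 : translMap (mα i) (((0, 0), k) : QSet n) = translMap (mβ i) ((0, 0), k) := by
        apply (β i.castSucc).2.1
        rw [e1, hmβ]
      have := congrArg (fun t : QSet n => t.1.1) e2
      simpa [translMap] using this
  · rintro ⟨hgr, hmeq⟩
    subst hmeq
    rcases Nat.eq_zero_or_pos n with hn | hn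
    · subst hn
      refine ⟨id, ⟨fun a b h => h, 0, 0, Fin.elim0, ?_, ?_, ?_⟩, Function.bijective_id, ?_⟩
      · intro x y i; exact i.elim0
      · intro x i; exact i.elim0
      · intro y i; exact i.elim0
      · intro j s; exact s.2.elim0
    · obtain ⟨g, hgM, hgbij, hg0⟩ := orbit_core hn (α 0).2 (β 0).2 hgr (hαn 0)
      refine ⟨g, hgM, hgbij, ?_⟩
      intro j
      induction j using Fin.induction with
      | zero => exact hg0
      | succ i ih =>
        intro s
        rw [← hmα i s, ih]
        exact hmβ i s
end
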